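/- arXiv:2505.22174 — 9 statements merged into one kernel-verified Lean document; each statement's English description precedes it below -/
import Mathlib

section
/- For every real ε > 0 and every deterministic online allocation algorithm F for n = 2 agents, there exist a 2-value stream v with v t i ∈ {1, 5} for all t ∈ ℕ and both agents i, and a time step T with 1 ≤ T ≤ 5, such that the allocation induced by F at the end of time step T is not (1/2 + ε)-EF1; that is, there exist agents i, j such that for every X ⊆ A_j^T with |X| ≤ 1, v_i(A_i^T) < (1/2 + ε) · Σ_{t ∈ A_j^T ∖ X} v t i. -/
/-!
The adversary first sends a good worth `1` to both agents; let `a` be its recipient and `b` the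
other agent. The second good is worth `5` to `a` and `1` to `b`: if `a` takes it, `b` owns
nothing while `a`'s bundle minus any one good is still worth `1` to `b`. Otherwise the third
good is again worth `1` to both, and the fourth is worth `5` to whoever took the third and `1`
to the other. In every branch but one, some agent now values her own bundle at most half of what
the other bundle is worth to her after removing its best good, which leaves a positive amount;
in the exceptional branch (`b` takes the third good, `a` the fourth) a fifth good worth `5` to
both creates such an agent whichever way it is allocated.
-/

open Finset

noncomputable section

/-- The agent to whom good `t` is assigned by the deterministic online algorithm `F`
on stream `v`: `σ(t) = F [v 0, …, v t]`. -/
def alloc (n : ℕ) (F : List (Fin n → NNReal) → Fin n) (v : ℕ → Fin n → NNReal) (t : ℕ) : Fin n :=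
  F ((List.range (t + 1)).map v)

/-- The bundle of agent `i` at the end of time step `T`. -/
def bundle (n : ℕ) (F : List (Fin n → NNReal) → Fin n) (v : ℕ → Fin n → NNReal)
    (i : Fin n) (T : ℕ) : Finset ℕ :=
  (Finset.range T).filter fun t => alloc n F v t = i

/-- The (real) value of the bundle `B` for agent `i`. -/
def bval (n : ℕ) (v : ℕ → Fin n → NNReal) (i : Fin n) (B : Finset ℕ) : ℝ :=
  ∑ t ∈ B, (v t i : ℝ)

/-- Agent `i` witnesses that the allocation at the end of step `T` is not `ρ`-EF1. -/
def ViolatesApproxEF1 (n : ℕ) (ρ : ℝ) (F : List (Fin n → NNReal) → Fin n)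
    (v : ℕ → Fin n → NNReal) (T : ℕ) (i j : Fin n) : Prop :=
  ∀ X ⊆ bundle n F v j T, X.card ≤ 1 →
    bval n v i (bundle n F v i T) < ρ * bval n v i (bundle n F v j T \ X)

section Bundles

variable {n : ℕ} {F : List (Fin n → NNReal) → Fin n} {v : ℕ → Fin n → NNReal}

lemma bundle_zero (i : Fin n) : bundle n F v i 0 = ∅ := rfl

lemma bundle_succ (i : Fin n) (T : ℕ) :
    bundle n F v i (T + 1) =
      if alloc n F v T = i then insert T (bundle n F v i T) else bundle n F v i T := by
  simp only [bundle, range_add_one, filter_insert]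

lemma bval_sub_le_bval_sdiff {i : Fin n} {B X : Finset ℕ} {M : ℝ} (hXB : X ⊆ B)
    (hX : X.card ≤ 1) (hM : ∀ t ∈ B, (v t i : ℝ) ≤ M) (hM0 : 0 ≤ M) :
    bval n v i B - M ≤ bval n v i (B \ X) := by
  have hXM : bval n v i X ≤ M := by
    obtain ⟨x, hx⟩ := card_le_one_iff_subset_singleton.mp hX
    obtain rfl | rfl := subset_singleton_iff.mp hx
    · simpa [bval] using hM0
    · simpa [bval] using hM x (hXB (mem_singleton_self x))
  rw [bval, bval, sum_sdiff_eq_sub hXB]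
  unfold bval at hXM
  linarith

lemma violatesApproxEF1_of_le {ρ : ℝ} (hρ : 1 / 2 < ρ) {T : ℕ} {i j : Fin n} {M : ℝ}
    (hM : ∀ t ∈ bundle n F v j T, (v t i : ℝ) ≤ M) (hM0 : 0 ≤ M)
    (hle : 2 * bval n v i (bundle n F v i T) + M ≤ bval n v i (bundle n F v j T))
    (hlt : M < bval n v i (bundle n F v j T)) :
    ViolatesApproxEF1 n ρ F v T i j := by
  intro X hXB hX
  have hsdiff := bval_sub_le_bval_sdiff hXB hX hM hM0
  nlinarith

end Bundles

lemma fin_two_eq_or_eq {a b : Fin 2} (hab : a ≠ b) (x : Fin 2) : x = a ∨ x = b := by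
  omega

def favoring (c : Fin 2) : Fin 2 → NNReal := fun i => if i = c then 5 else 1

lemma favoring_eq_one_or_eq_five (c i : Fin 2) : favoring c i = 1 ∨ favoring c i = 5 := by
  unfold favoring
  split_ifs <;> simp

theorem exists_violatesApproxEF1 {ρ : ℝ} (hρ : 1 / 2 < ρ) {F : List (Fin 2 → NNReal) → Fin 2}
    {v : ℕ → Fin 2 → NNReal} (hv0 : v 0 = 1) (hv1 : v 1 = favoring (alloc 2 F v 0))
    (hv2 : v 2 = 1) (hv3 : v 3 = favoring (alloc 2 F v 2)) (hv4 : v 4 = 5) :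
    ∃ T, 1 ≤ T ∧ T ≤ 5 ∧ ∃ i j, ViolatesApproxEF1 2 ρ F v T i j := by
  obtain ⟨a, h0⟩ : ∃ a, alloc 2 F v 0 = a := ⟨_, rfl⟩
  obtain ⟨b, hab⟩ : ∃ b, a ≠ b := ⟨a + 1, by omega⟩
  have hba := hab.symm
  rcases fin_two_eq_or_eq hab (alloc 2 F v 1) with h1 | h1
  · refine ⟨2, by norm_num, by norm_num, b, a, violatesApproxEF1_of_le hρ (M := 1) ?_ ?_ ?_ ?_⟩ <;>
      norm_num [bundle_succ, bundle_zero, bval, favoring, *]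
  rcases fin_two_eq_or_eq hab (alloc 2 F v 2) with h2 | h2 <;>
    rcases fin_two_eq_or_eq hab (alloc 2 F v 3) with h3 | h3
  · refine ⟨4, by norm_num, by norm_num, b, a, violatesApproxEF1_of_le hρ (M := 1) ?_ ?_ ?_ ?_⟩ <;>
      norm_num [bundle_succ, bundle_zero, bval, favoring, *]
  · refine ⟨4, by norm_num, by norm_num, a, b, violatesApproxEF1_of_le hρ (M := 5) ?_ ?_ ?_ ?_⟩ <;>
      norm_num [bundle_succ, bundle_zero, bval, favoring, *]
  · rcases fin_two_eq_or_eq hab (alloc 2 F v 4) with h4 | h4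
    · refine ⟨5, by norm_num, by norm_num, b, a, violatesApproxEF1_of_le hρ (M := 5) ?_ ?_ ?_ ?_⟩ <;>
        norm_num [bundle_succ, bundle_zero, bval, favoring, *]
    · refine ⟨5, by norm_num, by norm_num, a, b, violatesApproxEF1_of_le hρ (M := 5) ?_ ?_ ?_ ?_⟩ <;>
        norm_num [bundle_succ, bundle_zero, bval, favoring, *]
  · refine ⟨4, by norm_num, by norm_num, a, b, violatesApproxEF1_of_le hρ (M := 5) ?_ ?_ ?_ ?_⟩ <;>
      norm_num [bundle_succ, bundle_zero, bval, favoring, *]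

/-- The stream of `exists_violatesApproxEF1`; `F [1]` and `F [1, favoring (F [1]), 1]` are the
  recipients of goods `0` and `2`. -/
def adversary (F : List (Fin 2 → NNReal) → Fin 2) : ℕ → Fin 2 → NNReal
  | 1 => favoring (F [1])
  | 3 => favoring (F [1, favoring (F [1]), 1])
  | 4 => 5
  | _ => 1

lemma adversary_eq_one_or_eq_five (F : List (Fin 2 → NNReal) → Fin 2) (t : ℕ) (i : Fin 2) :
    adversary F t i = 1 ∨ adversary F t i = 5 := by
  unfold adversary
  split <;> simp [favoring_eq_one_or_eq_five]

/-- For every `ε > 0` and every deterministic online allocation algorithm for two agents,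
there is a stream with values in `{1, 5}` and a time step `1 ≤ T ≤ 5` at the end of which the
induced allocation is not `(1/2 + ε)`-EF1. -/
theorem statement0 (ε : ℝ) (hε : 0 < ε) (F : List (Fin 2 → NNReal) → Fin 2) :
    ∃ v : ℕ → Fin 2 → NNReal,
      (∀ (t : ℕ) (i : Fin 2), v t i = 1 ∨ v t i = 5) ∧
      ∃ T : ℕ, 1 ≤ T ∧ T ≤ 5 ∧
        ∃ i j : Fin 2,
          ∀ X ⊆ bundle 2 F v j T, X.card ≤ 1 →
            bval 2 v i (bundle 2 F v i T) <
              (1 / 2 + ε) * bval 2 v i (bundle 2 F v j T \ X) :=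
  ⟨adversary F, adversary_eq_one_or_eq_five F,
    exists_violatesApproxEF1 (by linarith) rfl rfl rfl rfl rfl⟩

end
end

section
/- For every integer n ≥ 1 and all α, β : Fin n → ℝ≥0 with β i ≤ α i for every i, there exists a deterministic online allocation algorithm F such that for every personalized 2-value stream v with parameters α, β and every time step T: every agent i with α i = β i > 0 (a 'type 2' agent) satisfies v_i(A_i^T) ≥ μ_i^n(T)/2, and every agent i with α i > β i = 0 (a 'type 3' agent) satisfies v_i(A_i^T) ≥ μ_i^n(T)/3. -/
/-!
The algorithm gives each good to an agent who values it positively and who, among those, has so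
far received the fewest goods it values positively. Take an agent `i` whose values lie in `{0, c}`
(types 2 and 3 both do), let `m` be the number of goods it values and `k` its count. A good valued
by `i` goes to `j` only while the count of `j` is at most that of `i`, and each such good raises
the count of `j`; so at most `k + 1` of these goods go to any `j`, exactly `k` go to `i`, and
`m < n (k + 1)`. By pigeonhole every partition into `n` bundles has one with at most `⌊m / n⌋`
valued goods, hence `μ_i ≤ c ⌊m / n⌋ ≤ c k = v_i(A_i)`: the agent gets its whole maximin share.
-/

open Finset

noncomputable section

/-- The `n`-agent maximin share of the additive valuation `w` over the finite set `S` of goods. -/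
def mmsN (n : ℕ) (S : Finset ℕ) (w : ℕ → ℝ) : ℝ :=
  sSup { x : ℝ | ∃ P : ℕ → Fin n,
    x = ⨅ j : Fin n, ∑ t ∈ S.filter (fun t => P t = j), w t }

open scoped NNReal

section MaximinShare

lemma sum_eq_mul_card_filter_ne_zero {ι : Type*} {s : Finset ι} {w : ι → ℝ} {c : ℝ}
    (hw : ∀ t ∈ s, w t = 0 ∨ w t = c) : ∑ t ∈ s, w t = c * #{t ∈ s | w t ≠ 0} := by
  rw [← sum_filter_ne_zero, sum_congr rfl fun t ht => ?_, sum_const, nsmul_eq_mul, mul_comm]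
  obtain ⟨hts, hwt⟩ := mem_filter.1 ht
  exact (hw t hts).resolve_left hwt

variable {n : ℕ} {S : Finset ℕ} {w : ℕ → ℝ}

lemma mmsN_nonneg (hw : ∀ t ∈ S, 0 ≤ w t) : 0 ≤ mmsN n S w :=
  Real.sSup_nonneg <| by
    rintro _ ⟨P, rfl⟩
    exact Real.iInf_nonneg fun j => sum_nonneg fun t ht => hw t (mem_filter.1 ht).1

lemma mmsN_le_of_two_valued [NeZero n] {c : ℝ} (hc : 0 ≤ c) (hw : ∀ t ∈ S, w t = 0 ∨ w t = c) :
    mmsN n S w ≤ c * (#{t ∈ S | w t ≠ 0} / n : ℕ) := by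
  refine Real.sSup_le ?_ (by positivity)
  rintro _ ⟨P, rfl⟩
  obtain ⟨j, -, hj⟩ := exists_card_fiber_lt_of_card_lt_mul (t := univ) (f := P)
    (by simpa [mul_comm] using Nat.lt_mul_div_succ #{t ∈ S | w t ≠ 0} (NeZero.pos n))
  calc (⨅ j, ∑ t ∈ S with P t = j, w t) ≤ ∑ t ∈ S with P t = j, w t :=
        ciInf_le (Set.finite_range _).bddBelow j
    _ = c * #{t ∈ {t ∈ S | P t = j} | w t ≠ 0} :=
        sum_eq_mul_card_filter_ne_zero fun t ht => hw t (mem_filter.1 ht).1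
    _ ≤ c * (#{t ∈ S | w t ≠ 0} / n : ℕ) := by
        rw [filter_comm]
        gcongr
        exact Nat.le_of_lt_succ hj

end MaximinShare

section LeastServed

variable {n : ℕ} [NeZero n]

def leastServed (c : Fin n → ℕ) (w : Fin n → ℝ≥0) : Fin n :=
  if h : ({i | w i ≠ 0} : Finset (Fin n)).Nonempty then (exists_min_image _ c h).choose else 0

lemma leastServed_spec (c : Fin n → ℕ) {w : Fin n → ℝ≥0} {i : Fin n} (hi : w i ≠ 0) :
    w (leastServed c w) ≠ 0 ∧ c (leastServed c w) ≤ c i := by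
  have hne : ({i | w i ≠ 0} : Finset (Fin n)).Nonempty := ⟨i, by simpa using hi⟩
  obtain ⟨hmem, hmin⟩ := (exists_min_image _ c hne).choose_spec
  rw [leastServed, dif_pos hne]
  exact ⟨(mem_filter.1 hmem).2, hmin i (by simpa using hi)⟩

def recordGood (c : Fin n → ℕ) (w : Fin n → ℝ≥0) (i : Fin n) : ℕ :=
  c i + if leastServed c w = i ∧ w i ≠ 0 then 1 else 0

def goodCounts (L : List (Fin n → ℝ≥0)) : Fin n → ℕ :=
  L.foldl recordGood 0

def leastServedAlg (L : List (Fin n → ℝ≥0)) : Fin n :=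
  leastServed (goodCounts L.dropLast) (L.getLastD 0)

variable (v : ℕ → Fin n → ℝ≥0)

local notation "σ" => alloc n leastServedAlg v

def streamCounts (t : ℕ) : Fin n → ℕ :=
  goodCounts ((List.range t).map v)

lemma alloc_leastServedAlg (t : ℕ) : σ t = leastServed (streamCounts v t) (v t) := by
  simp [alloc, leastServedAlg, streamCounts, List.range_succ]

lemma alloc_leastServedAlg_spec {t : ℕ} {i : Fin n} (hi : v t i ≠ 0) :
    v t (σ t) ≠ 0 ∧ streamCounts v t (σ t) ≤ streamCounts v t i :=
  alloc_leastServedAlg v t ▸ leastServed_spec (streamCounts v t) hi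

lemma streamCounts_succ (t : ℕ) (i : Fin n) :
    streamCounts v (t + 1) i = streamCounts v t i + if σ t = i ∧ v t i ≠ 0 then 1 else 0 := by
  simp [streamCounts, goodCounts, List.range_succ, recordGood, alloc_leastServedAlg]

lemma streamCounts_eq_card (T : ℕ) (i : Fin n) :
    streamCounts v T i = #{t ∈ bundle n leastServedAlg v i T | v t i ≠ 0} := by
  rw [bundle, filter_filter, card_filter]
  induction T with
  | zero => simp [streamCounts, goodCounts]
  | succ T ih => rw [streamCounts_succ, ih, sum_range_succ]

lemma streamCounts_mono (j : Fin n) : Monotone (streamCounts v · j) :=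
  monotone_nat_of_le_succ fun t => by simp only [streamCounts_succ, le_add_iff_nonneg_right, zero_le]

lemma streamCounts_strictMonoOn (j : Fin n) :
    StrictMonoOn (streamCounts v · j) {t | σ t = j ∧ v t j ≠ 0} := by
  intro t₁ (h₁ : σ t₁ = j ∧ v t₁ j ≠ 0) t₂ _ hlt
  calc streamCounts v t₁ j
      < streamCounts v (t₁ + 1) j := by rw [streamCounts_succ, if_pos h₁]; omega
    _ ≤ streamCounts v t₂ j := streamCounts_mono v j hlt

lemma card_filter_alloc_eq_le (T : ℕ) (i j : Fin n) :
    #{t ∈ range T | v t i ≠ 0 ∧ σ t = j} ≤ streamCounts v T i + 1 := by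
  have hmaps : Set.MapsTo (streamCounts v · j)
      ({t ∈ range T | v t i ≠ 0 ∧ σ t = j} : Finset ℕ) (range (streamCounts v T i + 1)) := by
    intro t ht
    obtain ⟨htT, hvi, rfl⟩ := by simpa using ht
    simpa [Nat.lt_succ_iff] using (alloc_leastServedAlg_spec v hvi).2.trans (streamCounts_mono v i htT.le)
  refine (card_le_card_of_injOn _ hmaps ((streamCounts_strictMonoOn v j).injOn.mono ?_)).trans
    (card_range _).le
  intro t ht
  obtain ⟨-, hvi, rfl⟩ := by simpa using ht
  exact ⟨rfl, (alloc_leastServedAlg_spec v hvi).1⟩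

lemma card_filter_ne_zero_lt (T : ℕ) (i : Fin n) :
    #{t ∈ range T | v t i ≠ 0} < n * (streamCounts v T i + 1) := by
  rw [card_eq_sum_card_fiberwise (f := σ) (t := univ) fun t _ => mem_coe.2 (mem_univ _)]
  calc ∑ j, #{t ∈ {t ∈ range T | v t i ≠ 0} | σ t = j}
      < ∑ _j : Fin n, (streamCounts v T i + 1) := by
        refine sum_lt_sum (fun j _ => ?_) ⟨i, mem_univ i, ?_⟩
        · rw [filter_filter]; exact card_filter_alloc_eq_le v T i j
        · rw [streamCounts_eq_card, bundle, filter_filter, filter_filter]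
          simp only [and_comm, Nat.lt_succ_self]
    _ = n * (streamCounts v T i + 1) := by simp

lemma mmsN_le_bval_leastServedAlg {c : ℝ≥0} (T : ℕ) (i : Fin n)
    (hv : ∀ t, v t i = 0 ∨ v t i = c) :
    mmsN n (range T) (fun t => (v t i : ℝ)) ≤ bval n v i (bundle n leastServedAlg v i T) := by
  have hw : ∀ t, (v t i : ℝ) = 0 ∨ (v t i : ℝ) = c := fun t => by simpa using hv t
  have hcount : #{t ∈ range T | (v t i : ℝ) ≠ 0} / n ≤ streamCounts v T i := by
    simp only [ne_eq, NNReal.coe_eq_zero]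
    rw [← Nat.lt_succ_iff, Nat.div_lt_iff_lt_mul (NeZero.pos n), mul_comm]
    exact card_filter_ne_zero_lt v T i
  calc mmsN n (range T) (fun t => (v t i : ℝ))
      ≤ c * (#{t ∈ range T | (v t i : ℝ) ≠ 0} / n : ℕ) :=
        mmsN_le_of_two_valued c.coe_nonneg fun t _ => hw t
    _ ≤ c * streamCounts v T i := by gcongr
    _ = bval n v i (bundle n leastServedAlg v i T) := by
        rw [bval, sum_eq_mul_card_filter_ne_zero fun t _ => hw t, streamCounts_eq_card]
        simp

end LeastServed

theorem statement4_general (n : ℕ) (hn : 1 ≤ n) (α β : Fin n → NNReal) :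
    ∃ F : List (Fin n → NNReal) → Fin n,
      ∀ v : ℕ → Fin n → NNReal, (∀ (t : ℕ) (i : Fin n), v t i = α i ∨ v t i = β i) →
        ∀ (T : ℕ) (i : Fin n),
          (α i = β i → 0 < α i →
            mmsN n (Finset.range T) (fun t => (v t i : ℝ)) / 2 ≤
              bval n v i (bundle n F v i T)) ∧
          (β i = 0 → 0 < α i →
            mmsN n (Finset.range T) (fun t => (v t i : ℝ)) / 3 ≤
              bval n v i (bundle n F v i T)) := by
  have : NeZero n := ⟨by omega⟩
  refine ⟨leastServedAlg, fun v hv T i => ?_⟩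
  have hfull (H : ∀ t, v t i = 0 ∨ v t i = α i) :
      0 ≤ mmsN n (range T) (fun t => (v t i : ℝ)) ∧
        mmsN n (range T) (fun t => (v t i : ℝ)) ≤ bval n v i (bundle n leastServedAlg v i T) :=
    ⟨mmsN_nonneg fun t _ => (v t i).coe_nonneg, mmsN_le_bval_leastServedAlg v T i H⟩
  refine ⟨fun hαβ _ => ?_, fun hβ _ => ?_⟩
  · obtain ⟨h0, hle⟩ := hfull fun t => Or.inr ((hv t i).elim id (·.trans hαβ.symm))
    linarith
  · obtain ⟨h0, hle⟩ := hfull fun t => (hv t i).symm.imp (·.trans hβ) id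
    linarith

/-- There is a deterministic online allocation algorithm such that, on every personalized
`2`-value stream, at every time step every type-2 agent (`α i = β i > 0`) gets at least half
its maximin share and every type-3 agent (`α i > β i = 0`) gets at least a third of it. -/
theorem statement4 (n : ℕ) (hn : 1 ≤ n) (α β : Fin n → NNReal) (hβα : ∀ i, β i ≤ α i) :
    ∃ F : List (Fin n → NNReal) → Fin n,
      ∀ v : ℕ → Fin n → NNReal, (∀ (t : ℕ) (i : Fin n), v t i = α i ∨ v t i = β i) →
        ∀ (T : ℕ) (i : Fin n),
          (α i = β i → 0 < α i →
            mmsN n (Finset.range T) (fun t => (v t i : ℝ)) / 2 ≤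
              bval n v i (bundle n F v i T)) ∧
          (β i = 0 → 0 < α i →
            mmsN n (Finset.range T) (fun t => (v t i : ℝ)) / 3 ≤
              bval n v i (bundle n F v i T)) :=
  statement4_general n hn α β

end
end

section
/- For every integer n ≥ 1 and all α, β : Fin n → ℝ≥0 with β i ≤ α i for every i, there exists a deterministic online allocation algorithm F such that for every personalized 2-value stream v with parameters α, β, every agent i with α i > β i > 0 (a 'type 1' agent), and every time step T: v_i(A_i^T) ≥ μ_i^n(T)/(2n−1); moreover, if n_h(i,T) ≥ n, then v_i(A_i^T) ≥ μ_i^n(T)/4. -/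
/-!
The algorithm only looks at which agents value the current good highly. It keeps, for every
agent `j`, the numbers `c j` of goods and `h j` of high-valued goods received so far. A good goes
to an agent valuing it highly whose `h j` is below `min c` (a *hungry* one), choosing the fewest
high goods; if there is none, to an agent with the fewest goods, preferring one valuing it
highly; remaining ties go to the smallest index.

Two counting facts follow. The counts stay balanced, `c j ≤ 2 c i + 1`, hence
`T - (n - 1) ≤ (2n - 1) c i`. Every high good of `i` that `i` does not get is charged to a pair
(recipient, count at most `h i`), so `i` sees at most `h i + 2 (n - 1) (h i + 1)` high goods, and
fewer than `n` while `h i = 0`. With fewer than `n` high goods, some maximin bundle consists of at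
most `T - (n - 1)` low goods, which gives the factor `2n - 1`; with at least `n`, comparing the
maximin share with the average `v_i(all) / n` gives `n μ ≤ (4n - 3) v_i(A_i)`.
-/

open Finset
open scoped Classical

noncomputable section

namespace OnlineMMS

section MaximinShare

variable {n : ℕ} {S : Finset ℕ} {w : ℕ → ℝ}

theorem mmsN_le_of_forall_exists_le {b : ℝ} (hb : 0 ≤ b)
    (h : ∀ P : ℕ → Fin n, ∃ j, ∑ t ∈ S with P t = j, w t ≤ b) : mmsN n S w ≤ b := by
  refine Real.sSup_le ?_ hb
  rintro x ⟨P, rfl⟩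
  obtain ⟨j, hj⟩ := h P
  exact ciInf_le_of_le (Set.finite_range _).bddBelow j hj

theorem mul_mmsN_le_sum [NeZero n] (hw : ∀ t ∈ S, 0 ≤ w t) :
    n * mmsN n S w ≤ ∑ t ∈ S, w t := by
  have hn : (0 : ℝ) < n := by simp [Nat.pos_of_neZero n]
  rw [← le_div_iff₀' hn]
  refine mmsN_le_of_forall_exists_le (div_nonneg (sum_nonneg hw) hn.le) fun P => ?_
  refine exists_le_of_sum_le univ_nonempty (le_of_eq ?_) |>.imp fun j hj => hj.2
  rw [sum_fiberwise S P w, sum_const, card_univ, Fintype.card_fin, nsmul_eq_mul,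
    mul_div_cancel₀ _ hn.ne']

theorem mmsN_le_sum_sdiff {E : Finset ℕ} (hE : #E < n) (hw : ∀ t ∈ S, 0 ≤ w t) :
    mmsN n S w ≤ ∑ t ∈ S \ E, w t := by
  refine mmsN_le_of_forall_exists_le (sum_nonneg fun t ht => hw t (mem_sdiff.1 ht).1) fun P => ?_
  obtain ⟨j, -, hj⟩ := exists_mem_notMem_of_card_lt_card (s := E.image P) (t := univ)
    (by simpa using card_image_le.trans_lt hE)
  refine ⟨j, sum_le_sum_of_subset_of_nonneg (fun t ht => ?_) fun t ht _ => hw t (mem_sdiff.1 ht).1⟩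
  rw [mem_filter] at ht
  exact mem_sdiff.2 ⟨ht.1, fun htE => hj (ht.2 ▸ mem_image_of_mem P htE)⟩

theorem mmsN_le_sub_mul_of_card_lt {E : Finset ℕ} {b : ℝ} (hE : #E < n) (hw : ∀ t ∈ S, 0 ≤ w t)
    (hwb : ∀ t ∈ S, t ∉ E → w t ≤ b) : mmsN n S w ≤ (#S - (n - 1) : ℕ) * b := by
  have hES : #(E ∩ S) ≤ min #S (n - 1) :=
    le_min (card_le_card inter_subset_right)
      ((card_le_card inter_subset_left).trans (Nat.le_sub_one_of_lt hE))
  obtain ⟨E', hEE', hE'S, hE'⟩ :=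
    exists_subsuperset_card_eq inter_subset_right hES (min_le_left #S (n - 1))
  calc mmsN n S w ≤ ∑ t ∈ S \ E', w t := mmsN_le_sum_sdiff (by omega) hw
    _ ≤ #(S \ E') • b := sum_le_card_nsmul _ _ _ fun t ht => by
        rw [mem_sdiff] at ht
        exact hwb t ht.1 fun htE => ht.2 (hEE' (mem_inter.2 ⟨htE, ht.1⟩))
    _ = (#S - (n - 1) : ℕ) * b := by
        rw [card_sdiff_of_subset hE'S, hE', nsmul_eq_mul]
        congr 2
        omega

end MaximinShare

theorem sum_eq_of_two_valued {ι : Type*} {B : Finset ι} {w : ι → ℝ} {p : ι → Prop} [DecidablePred p]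
    {a b : ℝ} (ha : ∀ t ∈ B, p t → w t = a) (hb : ∀ t ∈ B, ¬p t → w t = b) :
    ∑ t ∈ B, w t = #{t ∈ B | p t} * a + (#B - #{t ∈ B | p t} : ℝ) * b := by
  rw [← sum_filter_add_sum_filter_not B p, ← card_filter_add_card_filter_not (s := B) p,
    sum_congr rfl fun t ht => ha t (mem_filter.1 ht).1 (mem_filter.1 ht).2,
    sum_congr rfl fun t ht => hb t (mem_filter.1 ht).1 (mem_filter.1 ht).2]
  simp

section LinearOrder

variable {α : Type*} [LinearOrder α]

theorem injOn_of_lt_imp_ne {β : Type*} {A : Set α} {f : α → β}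
    (h : ∀ a ∈ A, ∀ b ∈ A, a < b → f a ≠ f b) : A.InjOn f := by
  intro a ha b hb hab
  rcases lt_trichotomy a b with hlt | heq | hgt
  · exact absurd hab (h a ha b hb hlt)
  · exact heq
  · exact absurd hab.symm (h b hb a ha hgt)

theorem card_le_of_strictMonoOn {A : Finset α} {f : α → ℕ} {m : ℕ} (hf : StrictMonoOn f A)
    (hm : ∀ t ∈ A, f t < m) : #A ≤ m := by
  simpa using card_le_card_of_injOn f (t := range m) (fun t ht => mem_range.2 (hm t ht)) hf.injOn

theorem card_le_of_strictMonoOn_fibers {n : ℕ} {A : Finset α} {g : α → Fin n} {f : α → ℕ}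
    {i : Fin n} {m : ℕ} (hg : ∀ t ∈ A, g t ≠ i) (hm : ∀ t ∈ A, f t < m)
    (hf : ∀ t ∈ A, ∀ t' ∈ A, t < t' → g t = g t' → f t < f t') : #A ≤ (n - 1) * m := by
  have hinj : Set.InjOn (fun t => (g t, f t)) A := injOn_of_lt_imp_ne fun a ha b hb hab heq =>
    (hf a ha b hb hab (Prod.ext_iff.1 heq).1).ne (Prod.ext_iff.1 heq).2
  simpa [card_erase_of_mem] using card_le_card_of_injOn _ (t := (univ.erase i) ×ˢ range m)
    (fun t ht => by simp [hg t ht, hm t ht]) hinj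

end LinearOrder

theorem card_filter_fin_eq_count (p : ℕ → Prop) [DecidablePred p] (t : ℕ) :
    #{s : Fin t | p s} = Nat.count p t := by
  rw [Nat.count_eq_card_filter_range]
  refine card_bij (fun s _ => s.val) (by simp) (fun a _ b _ h => Fin.ext h) (fun b hb => ?_)
  simp only [mem_filter, mem_range] at hb
  exact ⟨⟨b, hb.1⟩, by simpa using hb.2, rfl⟩

section GreedyChoice

variable {n : ℕ} [NeZero n]

def minCount (c : Fin n → ℕ) : ℕ := univ.inf' univ_nonempty c

theorem minCount_le (c : Fin n → ℕ) (j : Fin n) : minCount c ≤ c j :=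
  inf'_le c (mem_univ j)

theorem exists_eq_minCount (c : Fin n → ℕ) : ∃ j, c j = minCount c := by
  obtain ⟨j, -, hj⟩ := exists_mem_eq_inf' univ_nonempty c
  exact ⟨j, hj.symm⟩

/-- `c j` and `h j` are the numbers of goods and of high-valued goods agent `j` has received so
far, and `A` is the set of agents valuing the current good highly. -/
def hungry (c h : Fin n → ℕ) (A : Finset (Fin n)) : Finset (Fin n) :=
  {j ∈ A | h j < minCount c}

def greedyChoice (c h : Fin n → ℕ) (A : Finset (Fin n)) : Fin n :=
  if hS : (hungry c h A).Nonempty then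
    {j ∈ hungry c h A | h j = (hungry c h A).inf' hS h}.min' <| by
      obtain ⟨j, hj, hj'⟩ := exists_mem_eq_inf' hS h
      exact ⟨j, mem_filter.2 ⟨hj, hj'.symm⟩⟩
  else if hA : {j ∈ A | c j = minCount c}.Nonempty then {j ∈ A | c j = minCount c}.min' hA
  else ({j | c j = minCount c} : Finset (Fin n)).min' <| by
    obtain ⟨j, hj⟩ := exists_eq_minCount c
    exact ⟨j, mem_filter.2 ⟨mem_univ j, hj⟩⟩

variable {c h : Fin n → ℕ} {A : Finset (Fin n)} {u : Fin n}

private theorem greedyChoice_of_nonempty (hS : (hungry c h A).Nonempty) :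
    greedyChoice c h A ∈ hungry c h A ∧ h (greedyChoice c h A) = (hungry c h A).inf' hS h := by
  rw [greedyChoice, dif_pos hS]
  exact mem_filter.1 (min'_mem _ _)

theorem greedyChoice_mem_hungry (hS : (hungry c h A).Nonempty) :
    greedyChoice c h A ∈ hungry c h A :=
  (greedyChoice_of_nonempty hS).1

theorem apply_greedyChoice_le (hu : u ∈ hungry c h A) : h (greedyChoice c h A) ≤ h u := by
  rw [(greedyChoice_of_nonempty ⟨u, hu⟩).2]
  exact inf'_le h hu

theorem greedyChoice_le_of_apply_eq (hu : u ∈ hungry c h A)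
    (hhu : h u = h (greedyChoice c h A)) : greedyChoice c h A ≤ u := by
  rw [greedyChoice, dif_pos ⟨u, hu⟩]
  refine min'_le _ _ (mem_filter.2 ⟨hu, ?_⟩)
  rw [hhu, (greedyChoice_of_nonempty ⟨u, hu⟩).2]

theorem apply_greedyChoice_eq_minCount (hS : hungry c h A = ∅) :
    c (greedyChoice c h A) = minCount c := by
  rw [greedyChoice, dif_neg (not_nonempty_iff_eq_empty.2 hS)]
  split_ifs with hA
  · exact (mem_filter.1 (min'_mem _ hA)).2
  · exact (mem_filter.1 (min'_mem ({j | c j = minCount c} : Finset (Fin n)) _)).2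

theorem hungry_eq_empty_of_greedyChoice_notMem (hσ : greedyChoice c h A ∉ A) :
    hungry c h A = ∅ := by
  by_contra hS
  exact hσ (mem_filter.1 (greedyChoice_mem_hungry (nonempty_iff_ne_empty.2 hS))).1

theorem apply_ne_minCount_of_greedyChoice_notMem (hσ : greedyChoice c h A ∉ A) (hu : u ∈ A) :
    c u ≠ minCount c := by
  intro hcu
  have hA : {j ∈ A | c j = minCount c}.Nonempty := ⟨u, mem_filter.2 ⟨hu, hcu⟩⟩
  rw [greedyChoice, dif_neg (not_nonempty_iff_eq_empty.2
    (hungry_eq_empty_of_greedyChoice_notMem hσ)), dif_pos hA] at hσ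
  exact hσ (mem_filter.1 (min'_mem _ hA)).1

theorem greedyChoice_le_of_greedyChoice_notMem (hσ : greedyChoice c h A ∉ A)
    (hu : c u = minCount c) : greedyChoice c h A ≤ u := by
  have hA : ¬{j ∈ A | c j = minCount c}.Nonempty := fun ⟨j, hj⟩ =>
    apply_ne_minCount_of_greedyChoice_notMem hσ (mem_filter.1 hj).1 (mem_filter.1 hj).2
  rw [greedyChoice, dif_neg (not_nonempty_iff_eq_empty.2
    (hungry_eq_empty_of_greedyChoice_notMem hσ)), dif_neg hA]
  exact min'_le _ _ (mem_filter.2 ⟨mem_univ u, hu⟩)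

end GreedyChoice

section Stream

variable {n : ℕ} [NeZero n] (high : ℕ → Finset (Fin n))

/-- `high s` is the set of agents valuing good `s` highly. Counting over `s : Fin t` makes the
recursion visibly well founded; these counts are `received` and `receivedHigh` (`recipient_eq`). -/
def recipient (t : ℕ) : Fin n :=
  greedyChoice
    (fun j => #{s : Fin t | recipient s = j})
    (fun j => #{s : Fin t | recipient s = j ∧ j ∈ high s})
    (high t)
termination_by t
decreasing_by all_goals exact Fin.isLt _

def received (t : ℕ) (j : Fin n) : ℕ := Nat.count (recipient high · = j) t

def receivedHigh (t : ℕ) (j : Fin n) : ℕ :=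
  Nat.count (fun s => recipient high s = j ∧ j ∈ high s) t

def hungryAt (t : ℕ) : Finset (Fin n) :=
  hungry (received high t) (receivedHigh high t) (high t)

theorem recipient_eq (t : ℕ) :
    recipient high t = greedyChoice (received high t) (receivedHigh high t) (high t) := by
  rw [recipient]
  congr 1 <;> funext j
  · exact card_filter_fin_eq_count (recipient high · = j) t
  · exact card_filter_fin_eq_count (fun s => recipient high s = j ∧ j ∈ high s) t

variable {high} {s t : ℕ} {i j u : Fin n}

theorem received_lt_received (hs : recipient high s = j) (hst : s < t) :
    received high s j < received high t j :=
  Nat.count_strict_mono hs hst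

theorem receivedHigh_lt_receivedHigh (hs : recipient high s = j) (hj : j ∈ high s)
    (hst : s < t) : receivedHigh high s j < receivedHigh high t j :=
  Nat.count_strict_mono ⟨hs, hj⟩ hst

theorem received_mono (hst : s ≤ t) : received high s j ≤ received high t j :=
  Nat.count_monotone _ hst

theorem receivedHigh_mono (hst : s ≤ t) : receivedHigh high s j ≤ receivedHigh high t j :=
  Nat.count_monotone _ hst

theorem sum_received (t : ℕ) : ∑ j, received high t j = t := by
  simp only [received, Nat.count_eq_card_filter_range]
  rw [← card_eq_sum_card_fiberwise fun s _ => mem_univ (recipient high s), card_range]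

theorem minCount_le_receivedHigh (hi : i ∈ high t) (hni : i ∉ hungryAt high t) :
    minCount (received high t) ≤ receivedHigh high t i :=
  not_lt.1 fun hlt => hni (mem_filter.2 ⟨hi, hlt⟩)

theorem recipient_mem_hungryAt (hS : (hungryAt high t).Nonempty) :
    recipient high t ∈ hungryAt high t := by
  rw [recipient_eq]
  exact greedyChoice_mem_hungry hS

theorem receivedHigh_recipient_le (hu : u ∈ hungryAt high t) :
    receivedHigh high t (recipient high t) ≤ receivedHigh high t u := by
  rw [recipient_eq]
  exact apply_greedyChoice_le hu

theorem recipient_le_of_receivedHigh_eq (hu : u ∈ hungryAt high t)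
    (hhu : receivedHigh high t u = receivedHigh high t (recipient high t)) :
    recipient high t ≤ u := by
  rw [recipient_eq] at hhu ⊢
  exact greedyChoice_le_of_apply_eq hu hhu

theorem received_recipient_eq_minCount (hS : hungryAt high t = ∅) :
    received high t (recipient high t) = minCount (received high t) := by
  rw [recipient_eq]
  exact apply_greedyChoice_eq_minCount hS

theorem hungryAt_eq_empty_of_recipient_notMem (hσ : recipient high t ∉ high t) :
    hungryAt high t = ∅ := by
  rw [recipient_eq] at hσ
  exact hungry_eq_empty_of_greedyChoice_notMem hσ

theorem received_ne_minCount_of_recipient_notMem (hσ : recipient high t ∉ high t)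
    (hu : u ∈ high t) : received high t u ≠ minCount (received high t) := by
  rw [recipient_eq] at hσ
  exact apply_ne_minCount_of_greedyChoice_notMem hσ hu

theorem recipient_le_of_recipient_notMem (hσ : recipient high t ∉ high t)
    (hu : received high t u = minCount (received high t)) : recipient high t ≤ u := by
  rw [recipient_eq] at hσ ⊢
  exact greedyChoice_le_of_greedyChoice_notMem hσ hu

theorem recipient_congr {high high' : ℕ → Finset (Fin n)} {t : ℕ}
    (h : ∀ s ≤ t, high s = high' s) : recipient high t = recipient high' t := by
  induction t using Nat.strong_induction_on with
  | _ t ih =>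
    have hσ : ∀ s ∈ range t, recipient high s = recipient high' s := fun s hs =>
      ih s (mem_range.1 hs) fun r hr => h r (hr.trans (mem_range.1 hs).le)
    rw [recipient_eq, recipient_eq, h t le_rfl]
    congr 1 <;> funext j <;> simp only [received, receivedHigh, Nat.count_eq_card_filter_range]
    · exact congrArg card (filter_congr fun s hs => by rw [hσ s hs])
    · exact congrArg card (filter_congr fun s hs => by rw [hσ s hs, h s (mem_range.1 hs).le])

end Stream

section Counting

variable {n : ℕ} [NeZero n] {high : ℕ → Finset (Fin n)}

theorem received_le_two_mul_add_one (T : ℕ) (i j : Fin n) :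
    received high T j ≤ 2 * received high T i + 1 := by
  rw [received, Nat.count_eq_card_filter_range,
    ← card_filter_add_card_filter_not (fun t => (hungryAt high t).Nonempty), two_mul, add_assoc]
  apply add_le_add
  · -- in a hungry step `j`'s high count grows, and it stays below every total count
    refine card_le_of_strictMonoOn (f := (receivedHigh high · j)) ?_ fun t ht => ?_
    · intro s hs t _ hst
      simp only [mem_coe, mem_filter, mem_range] at hs
      have := recipient_mem_hungryAt hs.2
      rw [hs.1.2] at this
      exact receivedHigh_lt_receivedHigh hs.1.2 (mem_filter.1 this).1 hst
    · simp only [mem_filter, mem_range] at ht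
      have := recipient_mem_hungryAt ht.2
      rw [ht.1.2] at this
      calc receivedHigh high t j < minCount (received high t) := (mem_filter.1 this).2
        _ ≤ received high t i := minCount_le _ i
        _ ≤ received high T i := received_mono ht.1.1.le
  · -- in any other step `j` has the fewest goods
    refine card_le_of_strictMonoOn (f := (received high · j)) ?_ fun t ht => ?_
    · intro s hs t _ hst
      simp only [mem_coe, mem_filter, mem_range] at hs
      exact received_lt_received hs.1.2 hst
    · simp only [mem_filter, mem_range, not_nonempty_iff_eq_empty] at ht
      have := received_recipient_eq_minCount ht.2
      rw [ht.1.2] at this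
      calc received high t j = minCount (received high t) := this
        _ ≤ received high t i := minCount_le _ i
        _ < received high T i + 1 := Nat.lt_succ_of_le (received_mono ht.1.1.le)

theorem sub_le_mul_received (T : ℕ) (i : Fin n) :
    T - (n - 1) ≤ (2 * n - 1) * received high T i := by
  have hT : T ≤ received high T i + (n - 1) * (2 * received high T i + 1) :=
    calc T = ∑ j, received high T j := (sum_received T).symm
      _ = received high T i + ∑ j ∈ univ.erase i, received high T j :=
          (add_sum_erase _ _ (mem_univ i)).symm
      _ ≤ received high T i + (n - 1) * (2 * received high T i + 1) := by
          gcongr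
          simpa [card_erase_of_mem] using sum_le_card_nsmul (univ.erase i) _ _
            fun j _ => received_le_two_mul_add_one (high := high) T i j
  obtain ⟨m, rfl⟩ : ∃ m, n = m + 1 := ⟨n - 1, (Nat.succ_pred_eq_of_pos (NeZero.pos n)).symm⟩
  simp only [Nat.add_sub_cancel, show 2 * (m + 1) - 1 = 2 * m + 1 by omega] at hT ⊢
  rw [Nat.sub_le_iff_le_add]
  linarith

end Counting

section HighGoods

variable {n : ℕ} [NeZero n] {high : ℕ → Finset (Fin n)} {T t t' : ℕ} {i : Fin n}

theorem card_high_recipient_eq (T : ℕ) (i : Fin n) :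
    #{t ∈ {t ∈ range T | i ∈ high t} | recipient high t = i} = receivedHigh high T i := by
  rw [receivedHigh, Nat.count_eq_card_filter_range, filter_filter]
  simp only [and_comm]

theorem receivedHigh_recipient_le_of_mem_high (hi : i ∈ high t)
    (hS : (hungryAt high t).Nonempty) :
    receivedHigh high t (recipient high t) ≤ receivedHigh high t i := by
  by_cases hiS : i ∈ hungryAt high t
  · exact receivedHigh_recipient_le hiS
  · exact ((mem_filter.1 (recipient_mem_hungryAt hS)).2.trans_le
      (minCount_le_receivedHigh hi hiS)).le

theorem received_recipient_le_of_mem_high (hi : i ∈ high t) (hS : hungryAt high t = ∅) :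
    received high t (recipient high t) ≤ receivedHigh high t i := by
  rw [received_recipient_eq_minCount hS]
  exact minCount_le_receivedHigh hi (by simp [hS])

theorem card_high_le (T : ℕ) (i : Fin n) :
    #{t ∈ range T | i ∈ high t} ≤
      receivedHigh high T i + 2 * ((n - 1) * (receivedHigh high T i + 1)) := by
  set A := {t ∈ range T | i ∈ high t}
  have hmem {t} (ht : t ∈ {t ∈ A | ¬recipient high t = i}) : t < T ∧ i ∈ high t ∧
      recipient high t ≠ i := by
    simp only [A, mem_filter, mem_range] at ht
    exact ⟨ht.1.1, ht.1.2, ht.2⟩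
  have hhungry : #{t ∈ {t ∈ A | ¬recipient high t = i} | (hungryAt high t).Nonempty} ≤
      (n - 1) * (receivedHigh high T i + 1) := by
    refine card_le_of_strictMonoOn_fibers (g := recipient high) (i := i)
      (f := fun t => receivedHigh high t (recipient high t)) (fun t ht => ?_) (fun t ht => ?_) ?_
    · exact (hmem (mem_filter.1 ht).1).2.2
    · obtain ⟨htT, hi, -⟩ := hmem (mem_filter.1 ht).1
      exact Nat.lt_succ_of_le ((receivedHigh_recipient_le_of_mem_high hi (mem_filter.1 ht).2).trans
        (receivedHigh_mono htT.le))
    · intro t ht t' _ htt' hσ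
      rw [← hσ]
      exact receivedHigh_lt_receivedHigh rfl
        (mem_filter.1 (recipient_mem_hungryAt (mem_filter.1 ht).2)).1 htt'
  have hsated : #{t ∈ {t ∈ A | ¬recipient high t = i} | ¬(hungryAt high t).Nonempty} ≤
      (n - 1) * (receivedHigh high T i + 1) := by
    refine card_le_of_strictMonoOn_fibers (g := recipient high) (i := i)
      (f := fun t => received high t (recipient high t)) (fun t ht => ?_) (fun t ht => ?_) ?_
    · exact (hmem (mem_filter.1 ht).1).2.2
    · obtain ⟨htT, hi, -⟩ := hmem (mem_filter.1 ht).1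
      exact Nat.lt_succ_of_le ((received_recipient_le_of_mem_high hi
        (not_nonempty_iff_eq_empty.1 (mem_filter.1 ht).2)).trans (receivedHigh_mono htT.le))
    · intro t _ t' _ htt' hσ
      rw [← hσ]
      exact received_lt_received rfl htt'
  have := card_filter_add_card_filter_not (s := A) (recipient high · = i)
  have := card_filter_add_card_filter_not (s := {t ∈ A | ¬recipient high t = i})
    (hungryAt high · |>.Nonempty)
  rw [card_high_recipient_eq] at *
  omega

theorem mem_hungryAt_of_receivedHigh_eq_zero (hi : i ∈ high t) (h0 : receivedHigh high t i = 0)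
    (hσ : received high t (recipient high t) ≠ 0) : i ∈ hungryAt high t := by
  obtain ⟨u, hu⟩ : (hungryAt high t).Nonempty := by
    by_contra hS
    have := received_recipient_le_of_mem_high hi (not_nonempty_iff_eq_empty.1 hS)
    omega
  exact mem_filter.2 ⟨hi, h0 ▸ (Nat.zero_le _).trans_lt (mem_filter.1 hu).2⟩

theorem lt_recipient_of_recipient_notMem (hi : i ∈ high t) (h0 : receivedHigh high t i = 0)
    (hσ : recipient high t ∉ high t) : i < recipient high t := by
  -- The minimum count at `t` is `0` and `i` is not at it, so `i` got a low good at some `s < t`;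
  -- the recipient had no good at `s` either, and the tie-break at `s` put `i` first.
  have hS := hungryAt_eq_empty_of_recipient_notMem hσ
  have hmin : minCount (received high t) = 0 :=
    Nat.le_zero.1 (h0 ▸ minCount_le_receivedHigh hi (by simp [hS]))
  obtain ⟨s, hst, hs⟩ := Nat.count_ne_iff_exists.1
    (hmin ▸ received_ne_minCount_of_recipient_notMem hσ hi)
  have his : i ∉ high s := fun his => by
    have := receivedHigh_lt_receivedHigh hs his hst
    omega
  have hσs : received high s (recipient high t) = minCount (received high s) := by
    have := received_mono (high := high) (j := recipient high t) hst.le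
    have := minCount_le (received high s) (recipient high t)
    rw [received_recipient_eq_minCount hS, hmin] at *
    omega
  refine lt_of_le_of_ne (hs ▸ recipient_le_of_recipient_notMem (hs ▸ his) hσs) ?_
  rintro rfl
  exact hσ hi

theorem recipient_ne_of_lt (hi0 : receivedHigh high T i = 0) (hi : i ∈ high t)
    (hi' : i ∈ high t') (htt' : t < t') (ht'T : t' < T) :
    recipient high t ≠ recipient high t' := by
  -- A repeat recipient `j` must win `t'` as a hungry agent tied with `i` at no high goods, so
  -- `j < i`; and `j` got good `t` as a low good, where `lt_recipient_of_recipient_notMem` applies.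
  intro hσ
  have h0 {s} (hs : s ≤ T) : receivedHigh high s i = 0 :=
    Nat.le_zero.1 (hi0 ▸ receivedHigh_mono hs)
  have hit' : i ∈ hungryAt high t' := mem_hungryAt_of_receivedHigh_eq_zero hi' (h0 ht'T.le)
    (Nat.pos_iff_ne_zero.1 ((Nat.zero_le _).trans_lt (received_lt_received hσ htt')))
  have hσ0 : receivedHigh high t' (recipient high t') = 0 := by
    have := receivedHigh_recipient_le hit'
    rw [h0 ht'T.le] at this
    omega
  have hσi : recipient high t' ≤ i :=
    recipient_le_of_receivedHigh_eq hit' (by rw [hσ0, h0 ht'T.le])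
  have hσlow : recipient high t ∉ high t := fun hσt => by
    have := receivedHigh_lt_receivedHigh hσ (hσ ▸ hσt) htt'
    omega
  have := lt_recipient_of_recipient_notMem hi (h0 (htt'.trans ht'T).le) hσlow
  exact absurd (hσ ▸ hσi) (not_le.2 this)

theorem card_high_lt_of_receivedHigh_eq_zero (hi0 : receivedHigh high T i = 0) :
    #{t ∈ range T | i ∈ high t} < n := by
  have hinj : Set.InjOn (recipient high) ↑({t ∈ range T | i ∈ high t}) :=
    injOn_of_lt_imp_ne fun t ht t' ht' htt' => by
      simp only [mem_coe, mem_filter, mem_range] at ht ht'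
      exact recipient_ne_of_lt hi0 ht.2 ht'.2 htt' ht'.1
  have hne {t} (ht : t ∈ {t ∈ range T | i ∈ high t}) : recipient high t ≠ i := fun hσ => by
    rw [mem_filter, mem_range] at ht
    have := receivedHigh_lt_receivedHigh hσ ht.2 ht.1
    omega
  calc #{t ∈ range T | i ∈ high t} ≤ #(univ.erase i) :=
        card_le_card_of_injOn _ (fun t ht => mem_erase.2 ⟨hne ht, mem_univ _⟩) hinj
    _ < n := by simp [card_erase_of_mem, NeZero.pos n]

end HighGoods

section ValueStreams

variable {n : ℕ}

def highSets (α : Fin n → NNReal) (v : ℕ → Fin n → NNReal) (t : ℕ) : Finset (Fin n) :=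
  {j | v t j = α j}

theorem mem_highSets {α : Fin n → NNReal} {v : ℕ → Fin n → NNReal} {t : ℕ} {j : Fin n} :
    j ∈ highSets α v t ↔ v t j = α j := by
  simp [highSets]

variable [NeZero n]

/-- Entries past the end of the history are never consulted, so the default of `getD` is
irrelevant. -/
def greedyAlloc (α : Fin n → NNReal) (l : List (Fin n → NNReal)) : Fin n :=
  recipient (highSets α (l.getD · 0)) (l.length - 1)

variable {α β : Fin n → NNReal} {v : ℕ → Fin n → NNReal} {i : Fin n}

theorem bundle_greedyAlloc (T : ℕ) :
    bundle n (greedyAlloc α) v i T = {t ∈ range T | recipient (highSets α v) t = i} := by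
  refine filter_congr fun t _ => ?_
  rw [alloc, greedyAlloc, List.length_map, List.length_range, Nat.add_sub_cancel]
  refine Eq.congr_left (recipient_congr fun s hs => ?_)
  simp [highSets, List.getD_eq_getElem?_getD, Nat.lt_succ_of_le hs]

theorem card_bundle_greedyAlloc (T : ℕ) :
    #(bundle n (greedyAlloc α) v i T) = received (highSets α v) T i := by
  rw [bundle_greedyAlloc, received, Nat.count_eq_card_filter_range]

theorem bval_bundle_greedyAlloc (hv : ∀ t j, v t j = α j ∨ v t j = β j) (T : ℕ) :
    bval n v i (bundle n (greedyAlloc α) v i T) =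
      receivedHigh (highSets α v) T i * α i +
        (received (highSets α v) T i - receivedHigh (highSets α v) T i : ℝ) * β i := by
  rw [bval, sum_eq_of_two_valued (p := (v · i = α i)) (fun t _ ht => congrArg _ ht)
    (fun t _ ht => congrArg _ ((hv t i).resolve_left ht)), card_bundle_greedyAlloc,
    bundle_greedyAlloc, filter_filter, receivedHigh, Nat.count_eq_card_filter_range]
  simp only [mem_highSets]

theorem mul_received_le_bval (hv : ∀ t j, v t j = α j ∨ v t j = β j) (hβα : β i ≤ α i)
    (T : ℕ) : received (highSets α v) T i * (β i : ℝ) ≤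
      bval n v i (bundle n (greedyAlloc α) v i T) := by
  rw [← card_bundle_greedyAlloc, ← nsmul_eq_mul]
  exact card_nsmul_le_sum _ _ _ fun t _ => by
    rcases hv t i with h | h <;> rw [h]
    exact_mod_cast hβα

end ValueStreams

theorem total_value_le_mul_bundle_value {n T H c h a b : ℝ} (hn : 1 ≤ n) (hc : 1 ≤ c)
    (hh : 1 ≤ h) (hb : 0 ≤ b) (hba : b ≤ a) (hT : T ≤ (2 * n - 1) * c + (n - 1))
    (hH : H ≤ h + 2 * ((n - 1) * (h + 1))) :
    H * a + (T - H) * b ≤ (4 * n - 3) * (h * a + (c - h) * b) := by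
  have hH' : H ≤ (4 * n - 3) * h := by nlinarith
  have hT' : T ≤ (4 * n - 3) * c := by nlinarith
  nlinarith [mul_le_mul_of_nonneg_right hH' (sub_nonneg.2 hba), mul_le_mul_of_nonneg_right hT' hb]

section TypeOneAgent

variable {n : ℕ} [NeZero n] {α β : Fin n → NNReal} {v : ℕ → Fin n → NNReal} {i : Fin n}

theorem mmsN_le_of_card_high_lt (hv : ∀ t j, v t j = α j ∨ v t j = β j) (hβα : β i ≤ α i)
    (T : ℕ) (hH : #{t ∈ range T | v t i = α i} < n) :
    mmsN n (range T) (fun t => (v t i : ℝ)) ≤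
      (2 * n - 1) * bval n v i (bundle n (greedyAlloc α) v i T) := by
  have h2n : 1 ≤ 2 * n := by have := NeZero.pos n; omega
  have hraz : ((T - (n - 1) : ℕ) : ℝ) ≤ (2 * n - 1) * received (highSets α v) T i := by
    have := Nat.cast_le (α := ℝ) |>.2 (sub_le_mul_received (high := highSets α v) T i)
    rwa [Nat.cast_mul, Nat.cast_sub h2n, Nat.cast_mul, Nat.cast_ofNat, Nat.cast_one] at this
  have hlow := mmsN_le_sub_mul_of_card_lt (E := {t ∈ range T | v t i = α i}) (b := β i) hH
    (fun t _ => (v t i).2) fun t ht htE =>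
      le_of_eq (congrArg _ ((hv t i).resolve_left fun h => htE (mem_filter.2 ⟨ht, h⟩)))
  rw [card_range] at hlow
  calc mmsN n (range T) (fun t => (v t i : ℝ)) ≤ ((T - (n - 1) : ℕ) : ℝ) * β i := hlow
    _ ≤ (2 * n - 1) * received (highSets α v) T i * β i :=
        mul_le_mul_of_nonneg_right hraz (β i).2
    _ ≤ (2 * n - 1) * bval n v i (bundle n (greedyAlloc α) v i T) := by
        rw [mul_assoc]
        exact mul_le_mul_of_nonneg_left (mul_received_le_bval hv hβα T)
          (by rw [sub_nonneg]; exact_mod_cast h2n)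

theorem mul_mmsN_le_of_le_card_high (hv : ∀ t j, v t j = α j ∨ v t j = β j)
    (hβα : β i ≤ α i) (T : ℕ) (hH : n ≤ #{t ∈ range T | v t i = α i}) :
    n * mmsN n (range T) (fun t => (v t i : ℝ)) ≤
      (4 * n - 3) * bval n v i (bundle n (greedyAlloc α) v i T) := by
  set high := highSets α v
  have hHigh : {t ∈ range T | v t i = α i} = {t ∈ range T | i ∈ high t} := by
    simp only [high, mem_highSets]
  have hh : 1 ≤ receivedHigh high T i := Nat.one_le_iff_ne_zero.2 fun h0 =>
    (hHigh ▸ hH).not_gt (card_high_lt_of_receivedHigh_eq_zero h0)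
  have hHT : #{t ∈ range T | v t i = α i} ≤ T := (card_filter_le _ _).trans (card_range T).le
  have hraz := sub_le_mul_received (high := high) T i
  have h2n : 1 ≤ 2 * n := by have := NeZero.pos n; omega
  have hc : 1 ≤ received high T i := Nat.one_le_iff_ne_zero.2 fun h0 => by
    rw [h0, mul_zero] at hraz
    have := NeZero.pos n
    omega
  have hHb := hHigh ▸ card_high_le (high := high) T i
  have hμ := (mul_mmsN_le_sum (n := n) (S := range T) fun t _ => (v t i).2).trans_eq
    (sum_eq_of_two_valued (p := (v · i = α i)) (fun t _ ht => congrArg _ ht)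
      (fun t _ ht => congrArg _ ((hv t i).resolve_left ht)))
  rw [card_range] at hμ
  rw [bval_bundle_greedyAlloc hv]
  refine hμ.trans (total_value_le_mul_bundle_value (by exact_mod_cast NeZero.one_le)
    (by exact_mod_cast hc) (by exact_mod_cast hh) (β i).2 (by exact_mod_cast hβα) ?_ ?_)
  · have hT := Nat.cast_le (α := ℝ) |>.2 (Nat.sub_le_iff_le_add.1 hraz)
    push_cast [Nat.cast_sub NeZero.one_le, Nat.cast_sub h2n] at hT
    exact hT
  · have hH := Nat.cast_le (α := ℝ) |>.2 hHb
    push_cast [Nat.cast_sub NeZero.one_le] at hH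
    exact hH

end TypeOneAgent

end OnlineMMS

theorem statement5_general (n : ℕ) (hn : 1 ≤ n) (α β : Fin n → NNReal) :
    ∃ F : List (Fin n → NNReal) → Fin n,
      ∀ v : ℕ → Fin n → NNReal, (∀ (t : ℕ) (i : Fin n), v t i = α i ∨ v t i = β i) →
        ∀ i : Fin n, 0 < β i → β i < α i →
          ∀ T : ℕ,
            mmsN n (Finset.range T) (fun t => (v t i : ℝ)) / (2 * (n : ℝ) - 1) ≤
              bval n v i (bundle n F v i T) ∧
            (n ≤ ((Finset.range T).filter fun t => v t i = α i).card →
              mmsN n (Finset.range T) (fun t => (v t i : ℝ)) / 4 ≤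
                bval n v i (bundle n F v i T)) := by
  have : NeZero n := ⟨by omega⟩
  refine ⟨OnlineMMS.greedyAlloc α, fun v hv i _ hβα T => ?_⟩
  have hn' : (1 : ℝ) ≤ n := by exact_mod_cast hn
  have hV : 0 ≤ bval n v i (bundle n (OnlineMMS.greedyAlloc α) v i T) :=
    sum_nonneg fun t _ => (v t i).2
  have hμ := fun hH => OnlineMMS.mul_mmsN_le_of_le_card_high hv hβα.le T hH
  constructor
  · rw [div_le_iff₀ (by linarith), mul_comm]
    by_cases hH : n ≤ #{t ∈ range T | v t i = α i}
    · -- `4n - 3 ≤ n (2n - 1)` holds because `n` is a positive integer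
      have hK : (4 * n - 3 : ℝ) ≤ n * (2 * n - 1) := by
        rcases hn.eq_or_lt with rfl | hn2
        · norm_num
        · have : (2 : ℝ) ≤ n := by exact_mod_cast hn2
          nlinarith
      refine le_of_mul_le_mul_left ((hμ hH).trans ?_) (by linarith : (0 : ℝ) < n)
      nlinarith [mul_le_mul_of_nonneg_right hK hV]
    · exact OnlineMMS.mmsN_le_of_card_high_lt hv hβα.le T (not_le.1 hH)
  · intro hH
    rw [div_le_iff₀ four_pos]
    refine le_of_mul_le_mul_left ((hμ hH).trans ?_) (by linarith : (0 : ℝ) < n)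
    nlinarith

/-- There is a deterministic online allocation algorithm such that, on every personalized
`2`-value stream, every type-1 agent (`α i > β i > 0`) gets at least a `1/(2n−1)` fraction of
its maximin share at every time step, improving to `1/4` once it has seen at least `n`
high-valued goods. -/
theorem statement5 (n : ℕ) (hn : 1 ≤ n) (α β : Fin n → NNReal) (hβα : ∀ i, β i ≤ α i) :
    ∃ F : List (Fin n → NNReal) → Fin n,
      ∀ v : ℕ → Fin n → NNReal, (∀ (t : ℕ) (i : Fin n), v t i = α i ∨ v t i = β i) →
        ∀ i : Fin n, 0 < β i → β i < α i →
          ∀ T : ℕ,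
            mmsN n (Finset.range T) (fun t => (v t i : ℝ)) / (2 * (n : ℝ) - 1) ≤
              bval n v i (bundle n F v i T) ∧
            (n ≤ ((Finset.range T).filter fun t => v t i = α i).card →
              mmsN n (Finset.range T) (fun t => (v t i : ℝ)) / 4 ≤
                bval n v i (bundle n F v i T)) :=
  statement5_general n hn α β

end
end

section
/- Let n ≥ 2 be an integer, α ≥ n a real number, and ε > 0. Define a stream of 2n−1 goods by v t i = 1 for all agents i when t < n, and v t i = α for all agents i when n ≤ t ≤ 2n−2. Then for every assignment σ : Fin (2n−1) → Fin n of these goods to agents (which may be chosen with full knowledge of the entire instance), there exists a time step T with 1 ≤ T ≤ 2n−1 such that the partial allocation with bundles A_i^T = {t < T : σ t = i} is not (1/n + ε)-MMS; that is, some agent i has Σ_{t ∈ A_i^T} v t i < (1/n + ε) · μ_i^n(T). -/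
open Finset

noncomputable section

/-- The `n`-agent maximin share of the additive valuation `w` over the finite set `S` of goods:
the maximum, over partitions of `S` into `n` (possibly empty) bundles, of the minimum value
of a bundle. -/
def mmsG {G : Type*} (n : ℕ) (S : Finset G) (w : G → ℝ) : ℝ :=
  sSup { x : ℝ | ∃ P : G → Fin n,
    x = ⨅ j : Fin n, ∑ g ∈ S.filter (fun g => P g = j), w g }

/-!
After the `n` unit goods the maximin share is `1`, so an allocation that is still
`(1/n + ε)`-MMS must have given every agent one of them, hence exactly one. Only `n - 1`
goods of value `α` follow, so some agent ends with a single unit good, while the final maximin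
share is at least `n` (one valuable good per bundle, all unit goods in the last one);
and `1 < (1/n + ε) n`.
-/

lemma le_mmsG {G : Type*} {n : ℕ} [NeZero n] {S : Finset G} {w : G → ℝ} (P : G → Fin n)
    {c : ℝ} (hc : ∀ j : Fin n, c ≤ ∑ g ∈ S.filter (fun g => P g = j), w g) :
    c ≤ mmsG n S w := by
  have hbdd : BddAbove {x : ℝ | ∃ P : G → Fin n,
      x = ⨅ j : Fin n, ∑ g ∈ S.filter (fun g => P g = j), w g} := by
    refine ⟨∑ g ∈ S, |w g|, ?_⟩
    rintro _ ⟨Q, rfl⟩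
    calc (⨅ j, ∑ g ∈ S.filter (fun g => Q g = j), w g)
        ≤ ∑ g ∈ S.filter (fun g => Q g = 0), w g := ciInf_le (Set.finite_range _).bddBelow 0
      _ ≤ ∑ g ∈ S.filter (fun g => Q g = 0), |w g| := sum_le_sum fun g _ => le_abs_self _
      _ ≤ ∑ g ∈ S, |w g| :=
        sum_le_sum_of_subset_of_nonneg (filter_subset _ _) fun g _ _ => abs_nonneg _
  exact (le_ciInf hc).trans (le_csSup hbdd ⟨P, rfl⟩)

section Stream

variable {n : ℕ} {α : ℝ}

def streamValue (n : ℕ) (α : ℝ) (t : Fin (2 * n - 1)) : ℝ :=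
  if (t : ℕ) < n then 1 else α

lemma streamValue_nonneg (hα : 0 ≤ α) (t : Fin (2 * n - 1)) : 0 ≤ streamValue n α t := by
  unfold streamValue
  split_ifs
  exacts [zero_le_one, hα]

def unitGoods (n : ℕ) : Finset (Fin (2 * n - 1)) := {t | (t : ℕ) < n}

@[simp]
lemma mem_unitGoods {t : Fin (2 * n - 1)} : t ∈ unitGoods n ↔ (t : ℕ) < n := by
  simp [unitGoods]

lemma sum_streamValue_eq_card {s : Finset (Fin (2 * n - 1))} (hs : s ⊆ unitGoods n) :
    ∑ t ∈ s, streamValue n α t = #s := by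
  rw [card_eq_sum_ones, Nat.cast_sum, Nat.cast_one]
  exact sum_congr rfl fun t ht => if_pos (mem_unitGoods.mp (hs ht))

lemma card_unitGoods (n : ℕ) : #(unitGoods n) = n := by
  rw [unitGoods, Fin.card_filter_val_lt]
  omega

lemma one_le_mmsG_unitGoods [NeZero n] :
    1 ≤ mmsG n (unitGoods n) (streamValue n α) := by
  have hn := Nat.pos_of_neZero n
  set P : Fin (2 * n - 1) → Fin n := fun t => ⟨t % n, Nat.mod_lt _ hn⟩
  refine le_mmsG P fun j => ?_
  have hj : (⟨j, by omega⟩ : Fin (2 * n - 1)) ∈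
      (unitGoods n).filter (fun t => P t = j) := by
    simp [P, Fin.ext_iff, Nat.mod_eq_of_lt j.isLt]
  rw [sum_streamValue_eq_card (filter_subset _ _)]
  exact Nat.one_le_cast.mpr (card_pos.mpr ⟨_, hj⟩)

lemma natCast_le_mmsG_univ [NeZero n] (hα : (n : ℝ) ≤ α) :
    (n : ℝ) ≤ mmsG n univ (streamValue n α) := by
  have hn := Nat.pos_of_neZero n
  have hw := streamValue_nonneg (n := n) ((Nat.cast_nonneg n).trans hα)
  set P : Fin (2 * n - 1) → Fin n :=
    fun t => if (t : ℕ) < n then ⟨n - 1, by omega⟩ else ⟨t - n, by omega⟩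
  refine le_mmsG P fun j => ?_
  by_cases hj : (j : ℕ) < n - 1
  · have hg : (⟨n + j, by omega⟩ : Fin (2 * n - 1)) ∈ univ.filter (fun t => P t = j) := by
      simp [P, Fin.ext_iff]
    calc (n : ℝ) ≤ α := hα
      _ = streamValue n α ⟨n + j, by omega⟩ := by simp [streamValue]
      _ ≤ _ := single_le_sum (fun t _ => hw t) hg
  · have hsub : unitGoods n ⊆
        univ.filter (fun t => P t = j) := by
      intro t ht
      rw [mem_unitGoods] at ht
      simp only [mem_filter, mem_univ, true_and, P, ht, if_true, Fin.ext_iff]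
      omega
    calc (n : ℝ) = ∑ t ∈ unitGoods n, streamValue n α t := by
          rw [sum_streamValue_eq_card subset_rfl, card_unitGoods]
      _ ≤ _ := sum_le_sum_of_subset_of_nonneg hsub fun t _ _ => hw t

lemma exists_fiber_subset_unitGoods [NeZero n] (σ : Fin (2 * n - 1) → Fin n) :
    ∃ i, ∀ t, σ t = i → t ∈ unitGoods n := by
  by_contra! h
  have hsurj : Function.Surjective fun k : Fin (n - 1) => σ ⟨n + k, by omega⟩ := by
    intro i
    obtain ⟨t, rfl, hnt⟩ := h i
    rw [mem_unitGoods, not_lt] at hnt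
    refine ⟨⟨t - n, by omega⟩, congrArg σ (Fin.ext ?_)⟩
    simp only
    omega
  have := Fintype.card_le_of_surjective _ hsurj
  simp only [Fintype.card_fin] at this
  have := Nat.pos_of_neZero n
  omega

lemma injOn_unitGoods_of_forall_exists {σ : Fin (2 * n - 1) → Fin n}
    (h : ∀ i, ∃ t ∈ unitGoods n, σ t = i) : Set.InjOn σ (unitGoods n) :=
  injOn_of_surjOn_of_card_le σ (fun _ _ => mem_coe.mpr (mem_univ _))
    (fun i _ => by simpa using h i) (by simp [card_unitGoods])

lemma sum_streamValue_fiber_le_one {σ : Fin (2 * n - 1) → Fin n} {i : Fin n}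
    (hinj : Set.InjOn σ (unitGoods n)) (hi : ∀ t, σ t = i → t ∈ unitGoods n)
    (p : Fin (2 * n - 1) → Prop) [DecidablePred p] :
    ∑ t ∈ {t | p t ∧ σ t = i}, streamValue n α t ≤ 1 := by
  have hcard : #{t | p t ∧ σ t = i} ≤ 1 := card_le_one.mpr fun a ha b hb => by
    simp only [mem_filter, mem_univ, true_and] at ha hb
    exact hinj (hi a ha.2) (hi b hb.2) (ha.2.trans hb.2.symm)
  rw [sum_streamValue_eq_card fun t ht => hi t (mem_filter.mp ht).2.2]
  exact_mod_cast hcard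

end Stream

/-- For the stream of `2n−1` goods where the first `n` goods are worth `1` to everyone and the
last `n−1` goods are worth `α ≥ n` to everyone, every assignment of these goods to the agents
fails to be `(1/n + ε)`-MMS at the end of some time step `1 ≤ T ≤ 2n−1`. -/
theorem statement6 (n : ℕ) (hn : 2 ≤ n) (α : ℝ) (hα : (n : ℝ) ≤ α) (ε : ℝ) (hε : 0 < ε)
    (σ : Fin (2 * n - 1) → Fin n) :
    ∃ T : ℕ, 1 ≤ T ∧ T ≤ 2 * n - 1 ∧
      ∃ i : Fin n,
        (∑ t ∈ Finset.univ.filter (fun t : Fin (2 * n - 1) => (t : ℕ) < T ∧ σ t = i),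
            (if (t : ℕ) < n then (1 : ℝ) else α)) <
          (1 / (n : ℝ) + ε) *
            mmsG n (Finset.univ.filter fun t : Fin (2 * n - 1) => (t : ℕ) < T)
              (fun t => if (t : ℕ) < n then (1 : ℝ) else α) := by
  have : NeZero n := ⟨by omega⟩
  have hfactor : 0 < 1 / (n : ℝ) + ε := by positivity
  by_cases hfail : ∃ i : Fin n,
      ∑ t ∈ {t : Fin (2 * n - 1) | (t : ℕ) < n ∧ σ t = i}, streamValue n α t <
        (1 / (n : ℝ) + ε) * mmsG n (unitGoods n) (streamValue n α)
  · exact ⟨n, by omega, by omega, hfail⟩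
  push Not at hfail
  have hcover : ∀ i, ∃ t ∈ unitGoods n, σ t = i := fun i => by
    have hpos := (mul_pos hfactor (one_pos.trans_le one_le_mmsG_unitGoods)).trans_le (hfail i)
    obtain ⟨t, ht⟩ := nonempty_of_sum_ne_zero hpos.ne'
    simp only [mem_filter, mem_univ, true_and] at ht
    exact ⟨t, mem_unitGoods.mpr ht.1, ht.2⟩
  obtain ⟨i, hi⟩ := exists_fiber_subset_unitGoods σ
  refine ⟨2 * n - 1, by omega, le_rfl, i, ?_⟩
  calc _ ≤ (1 : ℝ) := sum_streamValue_fiber_le_one (injOn_unitGoods_of_forall_exists hcover) hi _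
    _ < (1 / (n : ℝ) + ε) * n := by
      rw [add_mul, one_div_mul_cancel (by positivity)]
      exact lt_add_of_pos_right 1 (by positivity)
    _ ≤ (1 / (n : ℝ) + ε) * mmsG n univ (streamValue n α) :=
      mul_le_mul_of_nonneg_left (natCast_le_mmsG_univ hα) hfactor.le
    _ = _ := by rw [filter_true_of_mem fun t _ => t.isLt]; rfl
end
end

section
/- Let n = 2 and let α, β : Fin 2 → ℝ≥0 satisfy β i ≤ α i for both agents i. There exists a deterministic online allocation algorithm with foresight 1 such that for every personalized 2-value stream v with parameters α, β: the induced allocation is EF2 (i.e., 1-EF2) at the end of every time step T, and EF1 (i.e., 1-EF1) at the end of every even time step T. -/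
open Finset

noncomputable section

/-- The agent to whom good `t` is assigned by the deterministic online algorithm `F` with
foresight `ℓ` on stream `v`: `σ(t) = F [v 0, …, v (t+ℓ)]`. -/
def allocF (n ℓ : ℕ) (F : List (Fin n → NNReal) → Fin n) (v : ℕ → Fin n → NNReal)
    (t : ℕ) : Fin n :=
  F ((List.range (t + ℓ + 1)).map v)

/-- The bundle of agent `i` at the end of time step `T`. -/
def bundleF (n ℓ : ℕ) (F : List (Fin n → NNReal) → Fin n) (v : ℕ → Fin n → NNReal)
    (i : Fin n) (T : ℕ) : Finset ℕ :=
  (Finset.range T).filter fun t => allocF n ℓ F v t = i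

/-!
Goods are handled in consecutive pairs `2k, 2k+1`; with foresight `1` both goods of a pair are
known when the first one arrives. If the agents do not strictly prefer the same good of the pair,
each receives a good it weakly prefers, and no envy grows. Otherwise the pair is contested: both
agents value the preferred good at `α` and the other at `β`, and the preferred good goes to agent
`0` and agent `1` alternately. Hence after each pair either nobody envies, or agent `0` won the
last contest, leads by `α 0 - β 0`, and the envy of agent `1` (at most `α 1 - β 1`) vanishes once
the good of value `α 1` it lost is removed. In the middle of a pair one more good must be removed.
-/

namespace TwoAgentOnline

section General

variable {n ℓ : ℕ} {F : List (Fin n → NNReal) → Fin n} {v : ℕ → Fin n → NNReal}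

def EnvyFreeUpTo (n ℓ : ℕ) (F : List (Fin n → NNReal) → Fin n) (v : ℕ → Fin n → NNReal)
    (k T : ℕ) : Prop :=
  ∀ i j, ∃ X ⊆ bundleF n ℓ F v j T, X.card ≤ k ∧
    bval n v i (bundleF n ℓ F v j T \ X) ≤ bval n v i (bundleF n ℓ F v i T)

def IsTwoValued (α β : Fin n → NNReal) (v : ℕ → Fin n → NNReal) : Prop :=
  ∀ t i, v t i = α i ∨ v t i = β i

lemma bval_mono (i : Fin n) {B B' : Finset ℕ} (h : B' ⊆ B) : bval n v i B' ≤ bval n v i B :=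
  sum_le_sum_of_subset_of_nonneg h fun _ _ _ => NNReal.coe_nonneg _

lemma bundleF_mono (j : Fin n) {T T' : ℕ} (h : T ≤ T') :
    bundleF n ℓ F v j T ⊆ bundleF n ℓ F v j T' :=
  filter_subset_filter _ (range_subset_range.mpr h)

lemma bundleF_succ (j : Fin n) (T : ℕ) :
    bundleF n ℓ F v j (T + 1) =
      if allocF n ℓ F v T = j then insert T (bundleF n ℓ F v j T) else bundleF n ℓ F v j T := by
  simp only [bundleF, range_add_one, filter_insert]

lemma bval_bundleF_succ (i j : Fin n) (T : ℕ) :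
    bval n v i (bundleF n ℓ F v j (T + 1)) =
      bval n v i (bundleF n ℓ F v j T) + if allocF n ℓ F v T = j then (v T i : ℝ) else 0 := by
  rw [bundleF_succ]
  split_ifs
  · rw [bval, sum_insert (by simp [bundleF]), add_comm]; rfl
  · rw [add_zero]

lemma EnvyFreeUpTo.mono {k k' T : ℕ} (h : EnvyFreeUpTo n ℓ F v k T) (hk : k ≤ k') :
    EnvyFreeUpTo n ℓ F v k' T := fun i j =>
  let ⟨X, hX, hcard, hval⟩ := h i j
  ⟨X, hX, hcard.trans hk, hval⟩

lemma EnvyFreeUpTo.succ {k T : ℕ} (h : EnvyFreeUpTo n ℓ F v k T) :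
    EnvyFreeUpTo n ℓ F v (k + 1) (T + 1) := by
  intro i j
  obtain ⟨X, hX, hcard, hval⟩ := h i j
  have hown : bval n v i (bundleF n ℓ F v i T) ≤ bval n v i (bundleF n ℓ F v i (T + 1)) :=
    bval_mono i (bundleF_mono i T.le_succ)
  rw [bundleF_succ j]
  split_ifs
  · refine ⟨insert T X, insert_subset_insert T hX, (card_insert_le T X).trans (by omega), ?_⟩
    rw [insert_sdiff_insert]
    exact (bval_mono i (sdiff_subset_sdiff le_rfl (subset_insert T X))).trans (hval.trans hown)
  · exact ⟨X, hX, hcard.trans k.le_succ, hval.trans hown⟩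

end General

open scoped Classical

def IsContested (x y : Fin 2 → NNReal) : Prop := (∀ i, y i < x i) ∨ (∀ i, x i < y i)

def contestedCount (v : ℕ → Fin 2 → NNReal) (K : ℕ) : ℕ :=
  #{k ∈ range K | IsContested (v (2 * k)) (v (2 * k + 1))}

def contestWinner (v : ℕ → Fin 2 → NNReal) (K : ℕ) : Fin 2 :=
  if Even (contestedCount v K) then 0 else 1

/-- The agent receiving `x` when the pair `x, y` is split; `w` is the winner if it is contested. -/
def firstTaker (x y : Fin 2 → NNReal) (w : Fin 2) : Fin 2 :=
  if ∀ i, y i < x i then w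
  else if ∀ i, x i < y i then w.rev
  else if y 0 ≤ x 0 ∧ x 1 ≤ y 1 then 0 else 1

def pairTaker (v : ℕ → Fin 2 → NNReal) (K : ℕ) : Fin 2 :=
  firstTaker (v (2 * K)) (v (2 * K + 1)) (contestWinner v K)

def assign (v : ℕ → Fin 2 → NNReal) (t : ℕ) : Fin 2 :=
  if Even t then pairTaker v (t / 2) else (pairTaker v (t / 2)).rev

/-- The list seen at step `t` ends with the previewed good `t + 1`. -/
def alg (l : List (Fin 2 → NNReal)) : Fin 2 :=
  assign (fun t => l.getD t 0) (l.length - 2)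

lemma assign_congr {v w : ℕ → Fin 2 → NNReal} {t : ℕ} (h : ∀ s ≤ t + 1, v s = w s) :
    assign v t = assign w t := by
  have hcount : contestedCount v (t / 2) = contestedCount w (t / 2) := by
    refine congrArg card (filter_congr fun k hk => ?_)
    rw [mem_range] at hk
    rw [h (2 * k) (by omega), h (2 * k + 1) (by omega)]
  simp only [assign, pairTaker, contestWinner, hcount, h (2 * (t / 2)) (by omega),
    h (2 * (t / 2) + 1) (by omega)]

lemma allocF_alg (v : ℕ → Fin 2 → NNReal) (t : ℕ) : allocF 2 1 alg v t = assign v t := by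
  rw [allocF, alg, List.length_map, List.length_range, show t + 1 + 1 - 2 = t by omega]
  refine assign_congr fun s hs => ?_
  simp [List.getD_eq_getElem?_getD, List.getElem?_range (show s < t + 1 + 1 by omega)]

lemma assign_two_mul (v : ℕ → Fin 2 → NNReal) (K : ℕ) : assign v (2 * K) = pairTaker v K := by
  simp [assign]

lemma assign_two_mul_add_one (v : ℕ → Fin 2 → NNReal) (K : ℕ) :
    assign v (2 * K + 1) = (pairTaker v K).rev := by
  simp [assign, show (2 * K + 1) / 2 = K by omega]

lemma contestedCount_succ (v : ℕ → Fin 2 → NNReal) (K : ℕ) :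
    contestedCount v (K + 1) = contestedCount v K +
      if IsContested (v (2 * K)) (v (2 * K + 1)) then 1 else 0 := by
  unfold contestedCount
  rw [range_add_one, filter_insert]
  split_ifs
  · rw [card_insert_of_notMem (by simp)]
  · rfl

lemma firstTaker_of_not_isContested {x y : Fin 2 → NNReal} (h : ¬ IsContested x y)
    (w i : Fin 2) :
    if firstTaker x y w = i then y i ≤ x i else x i ≤ y i := by
  simp only [IsContested, Fin.forall_fin_two, not_or, not_and_or, not_lt] at h
  simp only [firstTaker, Fin.forall_fin_two]
  fin_cases i <;> split_ifs <;> grind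

lemma eq_and_eq_of_lt {γ : Type*} [LinearOrder γ] {a b x y : γ} (hba : b ≤ a)
    (hx : x = a ∨ x = b) (hy : y = a ∨ y = b) (h : y < x) : x = a ∧ y = b := by
  rcases hx with rfl | rfl <;> rcases hy with rfl | rfl <;> first | exact ⟨rfl, rfl⟩ | order

def envy (v : ℕ → Fin 2 → NNReal) (i : Fin 2) (T : ℕ) : ℝ :=
  bval 2 v i (bundleF 2 1 alg v i.rev T) - bval 2 v i (bundleF 2 1 alg v i T)

lemma envy_two_mul_add_two (v : ℕ → Fin 2 → NNReal) (i : Fin 2) (K : ℕ) :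
    envy v i (2 * K + 2) = envy v i (2 * K) +
      if pairTaker v K = i then (v (2 * K + 1) i : ℝ) - v (2 * K) i
      else (v (2 * K) i : ℝ) - v (2 * K + 1) i := by
  simp only [envy, show 2 * K + 2 = 2 * K + 1 + 1 from rfl, bval_bundleF_succ, allocF_alg,
    assign_two_mul, assign_two_mul_add_one]
  generalize pairTaker v K = o
  fin_cases i <;> fin_cases o <;> simp <;> ring

lemma envy_le_of_not_isContested {v : ℕ → Fin 2 → NNReal} {K : ℕ}
    (hc : ¬ IsContested (v (2 * K)) (v (2 * K + 1))) (i : Fin 2) :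
    envy v i (2 * K + 2) ≤ envy v i (2 * K) := by
  have h : if pairTaker v K = i then v (2 * K + 1) i ≤ v (2 * K) i
      else v (2 * K) i ≤ v (2 * K + 1) i :=
    firstTaker_of_not_isContested hc (contestWinner v K) i
  rw [envy_two_mul_add_two]
  split_ifs at h ⊢ <;> linarith [NNReal.coe_le_coe.mpr h]

lemma mem_bundleF_alg {v : ℕ → Fin 2 → NNReal} {j : Fin 2} {t T : ℕ} :
    t ∈ bundleF 2 1 alg v j T ↔ t < T ∧ assign v t = j := by
  rw [bundleF, mem_filter, mem_range, allocF_alg]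

section Contested

variable {α β : Fin 2 → NNReal} {v : ℕ → Fin 2 → NNReal} {K : ℕ}

lemma pairTaker_of_forall_lt (h : ∀ i, v (2 * K + 1) i < v (2 * K) i) :
    pairTaker v K = contestWinner v K :=
  if_pos h

lemma pairTaker_of_forall_gt (h : ∀ i, v (2 * K) i < v (2 * K + 1) i) :
    pairTaker v K = (contestWinner v K).rev := by
  have h' : ¬ ∀ i, v (2 * K + 1) i < v (2 * K) i := fun h' => (h 0).not_gt (h' 0)
  rw [pairTaker, firstTaker, if_neg h', if_pos h]

variable (hβα : ∀ i, β i ≤ α i) (hv : IsTwoValued α β v)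
  (hc : IsContested (v (2 * K)) (v (2 * K + 1)))
include hβα hv hc

lemma envy_of_isContested (i : Fin 2) :
    envy v i (2 * K + 2) = envy v i (2 * K) +
      if contestWinner v K = i then (β i : ℝ) - α i else (α i : ℝ) - β i := by
  rw [envy_two_mul_add_two]
  rcases hc with hlt | hgt
  · obtain ⟨hfirst, hsecond⟩ := eq_and_eq_of_lt (hβα i) (hv _ i) (hv _ i) (hlt i)
    rw [pairTaker_of_forall_lt hlt, hfirst, hsecond]
  · obtain ⟨hsecond, hfirst⟩ := eq_and_eq_of_lt (hβα i) (hv _ i) (hv _ i) (hgt i)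
    rw [pairTaker_of_forall_gt hgt, hfirst, hsecond]
    generalize contestWinner v K = w
    fin_cases w <;> fin_cases i <;> simp

lemma exists_mem_bundleF_of_isContested :
    ∃ g ∈ bundleF 2 1 alg v (contestWinner v K) (2 * K + 2), ∀ i, v g i = α i := by
  rcases hc with hlt | hgt
  · refine ⟨2 * K, mem_bundleF_alg.mpr ⟨by omega, ?_⟩, fun i => ?_⟩
    · rw [assign_two_mul, pairTaker_of_forall_lt hlt]
    · exact (eq_and_eq_of_lt (hβα i) (hv _ i) (hv _ i) (hlt i)).1
  · refine ⟨2 * K + 1, mem_bundleF_alg.mpr ⟨by omega, ?_⟩, fun i => ?_⟩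
    · rw [assign_two_mul_add_one, pairTaker_of_forall_gt hgt, Fin.rev_rev]
    · exact (eq_and_eq_of_lt (hβα i) (hv _ i) (hv _ i) (hgt i)).1

end Contested

lemma envyFreeUpTo_of_envy_le {v : ℕ → Fin 2 → NNReal} {k T : ℕ}
    (h : ∀ i, ∃ X ⊆ bundleF 2 1 alg v i.rev T, X.card ≤ k ∧ envy v i T ≤ bval 2 v i X) :
    EnvyFreeUpTo 2 1 alg v k T := by
  intro i j
  obtain rfl | rfl : j = i ∨ j = i.rev := by fin_cases i <;> fin_cases j <;> simp
  · exact ⟨∅, empty_subset _, by simp, by rw [sdiff_empty]⟩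
  · obtain ⟨X, hX, hcard, henvy⟩ := h i
    refine ⟨X, hX, hcard, ?_⟩
    simp only [envy, bval] at henvy ⊢
    rw [sum_sdiff_eq_sub hX]
    linarith

section Invariant

variable {α β : Fin 2 → NNReal} {v : ℕ → Fin 2 → NNReal} {K : ℕ}

/-- After an odd number of contested pairs agent `0` has won one more of them than agent `1`. -/
def Invariant (α β : Fin 2 → NNReal) (v : ℕ → Fin 2 → NNReal) (K : ℕ) : Prop :=
  if Even (contestedCount v K) then envy v 0 (2 * K) ≤ 0 ∧ envy v 1 (2 * K) ≤ 0
  else envy v 0 (2 * K) ≤ -((α 0 : ℝ) - β 0) ∧ envy v 1 (2 * K) ≤ (α 1 : ℝ) - β 1 ∧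
    ∃ g ∈ bundleF 2 1 alg v 0 (2 * K), v g 1 = α 1

lemma invariant_zero : Invariant α β v 0 := by
  simp [Invariant, contestedCount, envy, bval, bundleF]

lemma invariant_succ_of_not_isContested (hc : ¬ IsContested (v (2 * K)) (v (2 * K + 1)))
    (h : Invariant α β v K) : Invariant α β v (K + 1) := by
  have h0 := envy_le_of_not_isContested hc 0
  have h1 := envy_le_of_not_isContested hc 1
  rw [Invariant, contestedCount_succ, if_neg hc, add_zero, mul_add_one]
  unfold Invariant at h
  split_ifs at h ⊢
  · exact ⟨h0.trans h.1, h1.trans h.2⟩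
  · obtain ⟨h0', h1', g, hg, hgv⟩ := h
    exact ⟨h0.trans h0', h1.trans h1', g, bundleF_mono 0 (by omega) hg, hgv⟩

lemma invariant_succ_of_isContested (hβα : ∀ i, β i ≤ α i) (hv : IsTwoValued α β v)
    (hc : IsContested (v (2 * K)) (v (2 * K + 1))) (h : Invariant α β v K) :
    Invariant α β v (K + 1) := by
  have h0 := envy_of_isContested hβα hv hc 0
  have h1 := envy_of_isContested hβα hv hc 1
  simp only [Invariant, contestedCount_succ, if_pos hc, Nat.even_add_one, mul_add_one]
  unfold Invariant at h
  by_cases heven : Even (contestedCount v K)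
  · have hw : contestWinner v K = 0 := if_pos heven
    obtain ⟨g, hg, hgv⟩ := exists_mem_bundleF_of_isContested hβα hv hc
    rw [hw] at h0 h1 hg
    rw [if_pos heven] at h
    rw [if_neg (not_not.mpr heven)]
    simp only [reduceIte, Fin.zero_eq_one_iff, OfNat.ofNat_ne_one] at h0 h1
    exact ⟨by linarith [h.1], by linarith [h.2], g, hg, hgv 1⟩
  · have hw : contestWinner v K = 1 := if_neg heven
    rw [hw] at h0 h1
    rw [if_neg heven] at h
    rw [if_pos heven]
    simp only [reduceIte, Fin.one_eq_zero_iff, OfNat.ofNat_ne_one] at h0 h1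
    exact ⟨by linarith [h.1], by linarith [h.2.1]⟩

lemma invariant (hβα : ∀ i, β i ≤ α i) (hv : IsTwoValued α β v) (K : ℕ) : Invariant α β v K := by
  induction K with
  | zero => exact invariant_zero
  | succ K ih =>
    by_cases hc : IsContested (v (2 * K)) (v (2 * K + 1))
    · exact invariant_succ_of_isContested hβα hv hc ih
    · exact invariant_succ_of_not_isContested hc ih

lemma envyFreeUpTo_one_two_mul (hβα : ∀ i, β i ≤ α i) (hv : IsTwoValued α β v) (K : ℕ) :
    EnvyFreeUpTo 2 1 alg v 1 (2 * K) := by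
  have hnil {i : Fin 2} (hi : envy v i (2 * K) ≤ 0) :
      ∃ X ⊆ bundleF 2 1 alg v i.rev (2 * K), X.card ≤ 1 ∧ envy v i (2 * K) ≤ bval 2 v i X :=
    ⟨∅, empty_subset _, by simp, by simpa [bval] using hi⟩
  have h := invariant hβα hv K
  refine envyFreeUpTo_of_envy_le (Fin.forall_fin_two.mpr ?_)
  unfold Invariant at h
  split_ifs at h
  · exact ⟨hnil h.1, hnil h.2⟩
  · obtain ⟨h0, h1, g, hg, hgv⟩ := h
    refine ⟨hnil (h0.trans (by simpa using hβα 0)), {g}, singleton_subset_iff.mpr hg, by simp, ?_⟩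
    simp only [bval, sum_singleton, hgv]
    linarith [(β 1).coe_nonneg]

end Invariant

end TwoAgentOnline

/-- For two agents, there is a deterministic online allocation algorithm with foresight `1`
that, on every personalized `2`-value stream, is EF2 at the end of every time step and EF1 at
the end of every even time step. -/
theorem statement7 (α β : Fin 2 → NNReal) (hβα : ∀ i, β i ≤ α i) :
    ∃ F : List (Fin 2 → NNReal) → Fin 2,
      ∀ v : ℕ → Fin 2 → NNReal, (∀ (t : ℕ) (i : Fin 2), v t i = α i ∨ v t i = β i) →
        (∀ (T : ℕ) (i j : Fin 2), ∃ X ⊆ bundleF 2 1 F v j T, X.card ≤ 2 ∧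
            bval 2 v i (bundleF 2 1 F v j T \ X) ≤ bval 2 v i (bundleF 2 1 F v i T)) ∧
        (∀ T : ℕ, Even T → ∀ i j : Fin 2, ∃ X ⊆ bundleF 2 1 F v j T, X.card ≤ 1 ∧
            bval 2 v i (bundleF 2 1 F v j T \ X) ≤ bval 2 v i (bundleF 2 1 F v i T)) := by
  refine ⟨TwoAgentOnline.alg, fun v hv => ⟨fun T => ?_, fun T hT => ?_⟩⟩
  · obtain ⟨K, rfl | rfl⟩ := Nat.even_or_odd' T
    · exact (TwoAgentOnline.envyFreeUpTo_one_two_mul hβα hv K).mono one_le_two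
    · exact (TwoAgentOnline.envyFreeUpTo_one_two_mul hβα hv K).succ
  · obtain ⟨K, rfl⟩ := hT
    rw [← two_mul]
    exact TwoAgentOnline.envyFreeUpTo_one_two_mul hβα hv K

end
end

section
/- Let n = 2 and let α, β : Fin 2 → ℝ≥0 satisfy β i ≤ α i for both agents i. There exists a deterministic online allocation algorithm with foresight 1 such that for every personalized 2-value stream v with parameters α, β and every even time step T = 2k: |A_1^T| = |A_2^T| = k, and there exist agents i ≠ j with {i, j} = {1, 2} such that v_j(A_j^T) ≥ v_j(A_i^T) and v_i(A_j^T) − v_i(A_i^T) ≤ α i − β i (i.e., at most one of the two agents envies the other, and that agent's envy is at most α i − β i). -/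
open Finset

noncomputable section

/-!
Goods are handed out in rounds of two: in round `m` one agent receives good `2m`, the other
good `2m + 1`, which foresight `1` lets the algorithm see together. Call an agent *favored* if it
is currently envious (agent `0` if nobody is). The favored agent takes the good of the round it
strictly prefers; if it is indifferent, the other agent takes the good it weakly prefers.

With `δ i = α i - β i`, the invariant is that every envy is at most `δ i` and some agent does not
envy. On a 2-value stream an agent's gain in a round (its own good's value minus the other good's)
is `δ i`, `0` or `-δ i`. If the favored agent strictly prefers a good, its envy (at most `δ`)
drops by `δ` to at most `0`, while the other, non-envious agent gains at least `-δ`; otherwise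
the favored agent's envy is unchanged and the other agent's does not grow.
-/

lemma bundleF_succ (n ℓ : ℕ) (F : List (Fin n → NNReal) → Fin n) (v : ℕ → Fin n → NNReal)
    (i : Fin n) (T : ℕ) :
    bundleF n ℓ F v i (T + 1) =
      if allocF n ℓ F v T = i then insert T (bundleF n ℓ F v i T) else bundleF n ℓ F v i T := by
  rw [bundleF, range_add_one, filter_insert]
  rfl

lemma self_notMem_bundleF (n ℓ : ℕ) (F : List (Fin n → NNReal) → Fin n)
    (v : ℕ → Fin n → NNReal) (i : Fin n) (T : ℕ) : T ∉ bundleF n ℓ F v i T := by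
  simp [bundleF]

lemma card_bundleF_succ (n ℓ : ℕ) (F : List (Fin n → NNReal) → Fin n)
    (v : ℕ → Fin n → NNReal) (i : Fin n) (T : ℕ) :
    (bundleF n ℓ F v i (T + 1)).card =
      (bundleF n ℓ F v i T).card + if allocF n ℓ F v T = i then 1 else 0 := by
  rw [bundleF_succ]
  split_ifs
  · exact card_insert_of_notMem (self_notMem_bundleF n ℓ F v i T)
  · rfl

lemma bval_bundleF_succ (n ℓ : ℕ) (F : List (Fin n → NNReal) → Fin n)
    (v : ℕ → Fin n → NNReal) (i j : Fin n) (T : ℕ) :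
    bval n v j (bundleF n ℓ F v i (T + 1)) =
      bval n v j (bundleF n ℓ F v i T) + if allocF n ℓ F v T = i then (v T j : ℝ) else 0 := by
  rw [bundleF_succ]
  split_ifs
  · rw [bval, sum_insert (self_notMem_bundleF n ℓ F v i T), add_comm]
    rfl
  · rw [add_zero]

namespace TwoAgentRounds

lemma eq_or_eq_one_sub (w i : Fin 2) : i = w ∨ i = 1 - w := by
  fin_cases w <;> fin_cases i <;> decide

lemma one_sub_ne (w : Fin 2) : 1 - w ≠ w := by
  fin_cases w <;> decide

lemma ite_add_ite_one_sub {M : Type*} [AddZeroClass M] (p i : Fin 2) (a b : M) :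
    ((if p = i then a else 0) + if 1 - p = i then b else 0) = if p = i then a else b := by
  fin_cases p <;> fin_cases i <;> simp

/-- The gain of agent `i` in a round where agent `p` receives `x` and the other agent `y`. -/
def gain (x y : Fin 2 → NNReal) (p i : Fin 2) : ℝ :=
  if p = i then (x i : ℝ) - y i else (y i : ℝ) - x i

def favored (E : Fin 2 → ℝ) : Fin 2 :=
  if 0 < E 1 then 1 else 0

/-- The recipient of `x` in a round with goods `x`, `y` and favored agent `w`. -/
def recipient (w : Fin 2) (x y : Fin 2 → NNReal) : Fin 2 :=
  if y w < x w then w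
  else if x w < y w then 1 - w
  else if y (1 - w) ≤ x (1 - w) then 1 - w
  else w

def envyUpdate (E : Fin 2 → ℝ) (x y : Fin 2 → NNReal) (i : Fin 2) : ℝ :=
  E i - gain x y (recipient (favored E) x y) i

def envy (v : ℕ → Fin 2 → NNReal) : ℕ → Fin 2 → ℝ
  | 0 => 0
  | m + 1 => envyUpdate (envy v m) (v (2 * m)) (v (2 * m + 1))

/-- The recipient of good `2m`. -/
def pick (v : ℕ → Fin 2 → NNReal) (m : ℕ) : Fin 2 :=
  recipient (favored (envy v m)) (v (2 * m)) (v (2 * m + 1))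

def alloc (v : ℕ → Fin 2 → NNReal) (t : ℕ) : Fin 2 :=
  if t % 2 = 0 then pick v (t / 2) else 1 - pick v (t / 2)

/-- The online algorithm: on the prefix `[v 0, …, v (t + 1)]` it assigns good `t`. -/
def algorithm (L : List (Fin 2 → NNReal)) : Fin 2 :=
  alloc (fun s => L.getD s 0) (L.length - 2)

section Causality

variable {v w : ℕ → Fin 2 → NNReal}

lemma envy_congr (m : ℕ) (h : ∀ s < 2 * m, v s = w s) : envy v m = envy w m := by
  induction m with
  | zero => rfl
  | succ m ih =>
    simp only [envy, ih fun s hs => h s (by omega), h (2 * m) (by omega),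
      h (2 * m + 1) (by omega)]

lemma alloc_congr (t : ℕ) (h : ∀ s < t + 2, v s = w s) : alloc v t = alloc w t := by
  have hpick : pick v (t / 2) = pick w (t / 2) := by
    simp only [pick, envy_congr (t / 2) fun s hs => h s (by omega), h (2 * (t / 2)) (by omega),
      h (2 * (t / 2) + 1) (by omega)]
  simp only [alloc, hpick]

end Causality

variable (v : ℕ → Fin 2 → NNReal)

lemma allocF_algorithm (t : ℕ) : allocF 2 1 algorithm v t = alloc v t := by
  rw [allocF, algorithm, List.length_map, List.length_range, show t + 1 + 1 - 2 = t by omega]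
  refine alloc_congr t fun s hs => ?_
  rw [List.getD_eq_getElem _ _ (by simp; omega), List.getElem_map, List.getElem_range]

lemma allocF_algorithm_two_mul (m : ℕ) : allocF 2 1 algorithm v (2 * m) = pick v m := by
  simp [allocF_algorithm, alloc]

lemma allocF_algorithm_two_mul_add_one (m : ℕ) :
    allocF 2 1 algorithm v (2 * m + 1) = 1 - pick v m := by
  simp [allocF_algorithm, alloc, Nat.add_mod, Nat.add_div]

lemma card_bundleF_algorithm (i : Fin 2) (k : ℕ) :
    (bundleF 2 1 algorithm v i (2 * k)).card = k := by
  induction k with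
  | zero => simp [bundleF]
  | succ k ih =>
    rw [Nat.mul_succ, card_bundleF_succ, card_bundleF_succ, add_assoc, ih,
      allocF_algorithm_two_mul, allocF_algorithm_two_mul_add_one, ite_add_ite_one_sub]
    split_ifs <;> rfl

lemma bval_bundleF_algorithm_succ (i j : Fin 2) (k : ℕ) :
    bval 2 v j (bundleF 2 1 algorithm v i (2 * (k + 1))) =
      bval 2 v j (bundleF 2 1 algorithm v i (2 * k)) +
        if pick v k = i then (v (2 * k) j : ℝ) else v (2 * k + 1) j := by
  rw [Nat.mul_succ, bval_bundleF_succ, bval_bundleF_succ, add_assoc,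
    allocF_algorithm_two_mul, allocF_algorithm_two_mul_add_one, ite_add_ite_one_sub]

lemma envy_eq (k : ℕ) (i : Fin 2) :
    envy v k i = bval 2 v i (bundleF 2 1 algorithm v (1 - i) (2 * k)) -
      bval 2 v i (bundleF 2 1 algorithm v i (2 * k)) := by
  induction k with
  | zero => simp [envy, bundleF, bval]
  | succ k ih =>
    rw [bval_bundleF_algorithm_succ, bval_bundleF_algorithm_succ]
    change envy v k i - gain _ _ (pick v k) i = _
    rw [ih, gain]
    fin_cases i <;> rcases eq_or_eq_one_sub 0 (pick v k) with hp | hp <;> simp [hp] <;> ring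

section Invariant

variable {α β : Fin 2 → NNReal}

lemma gain_recipient (w : Fin 2) (x y : Fin 2 → NNReal) :
    0 < gain x y (recipient w x y) w ∨
      gain x y (recipient w x y) w = 0 ∧ 0 ≤ gain x y (recipient w x y) (1 - w) := by
  have hne := one_sub_ne w
  unfold recipient
  split_ifs with h₁ h₂ h₃ <;> simp only [gain, ↓reduceIte, hne, hne.symm]
  · exact Or.inl (sub_pos.mpr (by exact_mod_cast h₁))
  · exact Or.inl (sub_pos.mpr (by exact_mod_cast h₂))
  · have : x w = y w := le_antisymm (not_lt.mp h₁) (not_lt.mp h₂)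
    exact Or.inr ⟨by rw [this, sub_self], sub_nonneg.mpr (by exact_mod_cast h₃)⟩
  · have : x w = y w := le_antisymm (not_lt.mp h₁) (not_lt.mp h₂)
    exact Or.inr ⟨by rw [this, sub_self], sub_nonneg.mpr (by exact_mod_cast (not_le.mp h₃).le)⟩

lemma sub_eq_of_twoValued {a b α β : NNReal} (hβα : β ≤ α) (ha : a = α ∨ a = β)
    (hb : b = α ∨ b = β) :
    (a : ℝ) - b = α - β ∨ (a : ℝ) - b = 0 ∨ (a : ℝ) - b = -(α - β) := by
  rcases ha with rfl | rfl <;> rcases hb with rfl | rfl <;> simp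

lemma gain_eq_of_twoValued (hβα : ∀ i, β i ≤ α i) {x y : Fin 2 → NNReal}
    (hx : ∀ i, x i = α i ∨ x i = β i) (hy : ∀ i, y i = α i ∨ y i = β i) (p i : Fin 2) :
    gain x y p i = α i - β i ∨ gain x y p i = 0 ∨ gain x y p i = -(α i - β i) := by
  unfold gain
  split_ifs
  · exact sub_eq_of_twoValued (hβα i) (hx i) (hy i)
  · exact sub_eq_of_twoValued (hβα i) (hy i) (hx i)

def EnvyBounded (δ E : Fin 2 → ℝ) : Prop :=
  (∀ i, E i ≤ δ i) ∧ ∃ i, E i ≤ 0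

lemma favored_spec {E : Fin 2 → ℝ} (h : ∃ i, E i ≤ 0) : E (1 - favored E) ≤ 0 := by
  obtain ⟨i, hi⟩ := h
  unfold favored
  split_ifs with hE
  · fin_cases i
    · exact hi
    · exact absurd hi (not_le.mpr hE)
  · exact not_lt.mp hE

lemma envyBounded_envyUpdate (hβα : ∀ i, β i ≤ α i) {x y : Fin 2 → NNReal}
    (hx : ∀ i, x i = α i ∨ x i = β i) (hy : ∀ i, y i = α i ∨ y i = β i) {E : Fin 2 → ℝ}
    (hE : EnvyBounded (fun i => α i - β i) E) :
    EnvyBounded (fun i => α i - β i) (envyUpdate E x y) := by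
  obtain ⟨hle, hnonenvious⟩ := hE
  set w := favored E
  set o := 1 - w
  set g := gain x y (recipient w x y)
  have hδ : ∀ i, (0 : ℝ) ≤ α i - β i := fun i => sub_nonneg.mpr (by exact_mod_cast hβα i)
  have ho : E o ≤ 0 := favored_spec hnonenvious
  have hw : E w ≤ α w - β w := hle w
  have hgo : -(α o - β o) ≤ g o := by
    rcases gain_eq_of_twoValued hβα hx hy (recipient w x y) o with h | h | h <;>
      linarith [hδ o]
  have hgw : g w = α w - β w ∨ g w = 0 ∧ 0 ≤ g o := by
    rcases gain_recipient w x y with hpos | hzero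
    · rcases gain_eq_of_twoValued hβα hx hy (recipient w x y) w with h | h | h
      · exact Or.inl h
      all_goals linarith [hδ w]
    · exact Or.inr hzero
  have hupd : ∀ i, envyUpdate E x y i = E i - g i := fun i => rfl
  refine ⟨fun i => ?_, ?_⟩
  · rcases eq_or_eq_one_sub w i with rfl | rfl <;> rw [hupd] <;>
      rcases hgw with h | ⟨h, -⟩ <;> linarith [hδ w, hδ o]
  · rcases hgw with h | ⟨h, h'⟩
    · exact ⟨w, by rw [hupd]; linarith⟩
    · exact ⟨o, by rw [hupd]; linarith⟩

lemma envyBounded_envy (hβα : ∀ i, β i ≤ α i) (hv : ∀ t i, v t i = α i ∨ v t i = β i)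
    (k : ℕ) : EnvyBounded (fun i => α i - β i) (envy v k) := by
  induction k with
  | zero => exact ⟨fun i => sub_nonneg.mpr (by exact_mod_cast hβα i), 0, le_rfl⟩
  | succ k ih => exact envyBounded_envyUpdate hβα (hv _) (hv _) ih

end Invariant

end TwoAgentRounds

/-- For two agents, there is a deterministic online allocation algorithm with foresight `1`
such that, on every personalized `2`-value stream and every even time step `T = 2k`, both
bundles have exactly `k` goods, and at most one agent envies the other, by at most
`α i − β i`. -/
theorem statement8 (α β : Fin 2 → NNReal) (hβα : ∀ i, β i ≤ α i) :
    ∃ F : List (Fin 2 → NNReal) → Fin 2,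
      ∀ v : ℕ → Fin 2 → NNReal, (∀ (t : ℕ) (i : Fin 2), v t i = α i ∨ v t i = β i) →
        ∀ k : ℕ,
          (∀ i : Fin 2, (bundleF 2 1 F v i (2 * k)).card = k) ∧
          ∃ i j : Fin 2, i ≠ j ∧
            bval 2 v j (bundleF 2 1 F v i (2 * k)) ≤ bval 2 v j (bundleF 2 1 F v j (2 * k)) ∧
            bval 2 v i (bundleF 2 1 F v j (2 * k)) - bval 2 v i (bundleF 2 1 F v i (2 * k)) ≤
              (α i : ℝ) - (β i : ℝ) := by
  refine ⟨TwoAgentRounds.algorithm, fun v hv k =>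
    ⟨fun i => TwoAgentRounds.card_bundleF_algorithm v i k, ?_⟩⟩
  obtain ⟨hle, j, hj⟩ := TwoAgentRounds.envyBounded_envy v hβα hv k
  have hi := hle (1 - j)
  rw [TwoAgentRounds.envy_eq] at hj hi
  rw [show 1 - (1 - j) = j by omega] at hi
  exact ⟨1 - j, j, TwoAgentRounds.one_sub_ne j, sub_nonpos.mp hj, hi⟩

end
end

section
/- Let n = 2 and let α, β : Fin 2 → ℝ≥0 satisfy 0 < β i ≤ α i for both agents i. There exists a deterministic online allocation algorithm with foresight 1 such that for every personalized 2-value stream v with parameters α, β and every positive integer λ, there exists T₀ ∈ ℕ such that for every time step T ≥ T₀ the induced allocation is (λ/(λ+2))-EF, (λ/(λ+1))-EF1, and (λ/(λ+1))-PROP. -/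
/-!
The algorithm cuts the stream into consecutive pairs and gives one good of each pair to each
agent, so each agent's own value grows by at least `β i` per pair. With two values per agent, a
pair changes agent `i`'s envy `v_i(A_j) - v_i(A_i)` by `0` or `±(α i - β i)`, and swapping the pair
flips the sign of both changes. Counted in these units, the envies `(d₀, d₁)` can be kept in the
region `d₀ ≤ 1, d₁ ≤ 1, d₀ + d₁ ≤ 0` forever, so envy stays below `2 α i` while own value grows
linearly. Eventually `λ v_i(A_j) ≤ (λ + 1) v_i(A_i)` for all `i, j`, and for two agents this one
inequality gives EF, EF1 (with `X = ∅`) and PROP.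
-/

open Finset

noncomputable section

open Filter

theorem bval_nonneg {n : ℕ} (v : ℕ → Fin n → NNReal) (i : Fin n) (B : Finset ℕ) :
    0 ≤ bval n v i B :=
  sum_nonneg fun t _ => (v t i).2

theorem sum_bval_bundleF {n ℓ : ℕ} (F : List (Fin n → NNReal) → Fin n)
    (v : ℕ → Fin n → NNReal) (i : Fin n) (T : ℕ) :
    ∑ j, bval n v i (bundleF n ℓ F v j T) = ∑ t ∈ range T, (v t i : ℝ) :=
  sum_fiberwise _ _ _

theorem prop_of_forall_ef {n ℓ : ℕ} {F : List (Fin n → NNReal) → Fin n}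
    {v : ℕ → Fin n → NNReal} {ρ : ℝ} {i : Fin n} {T : ℕ}
    (hef : ∀ j, ρ * bval n v i (bundleF n ℓ F v j T) ≤ bval n v i (bundleF n ℓ F v i T)) :
    ρ / n * ∑ t ∈ range T, (v t i : ℝ) ≤ bval n v i (bundleF n ℓ F v i T) := by
  have hn : (0 : ℝ) < n := by exact_mod_cast i.pos
  rw [← sum_bval_bundleF F, div_mul_eq_mul_div, div_le_iff₀ hn, mul_sum]
  calc ∑ j, ρ * bval n v i (bundleF n ℓ F v j T)
      ≤ ∑ _j : Fin n, bval n v i (bundleF n ℓ F v i T) := sum_le_sum fun j _ => hef j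
    _ = bval n v i (bundleF n ℓ F v i T) * n := by simp [mul_comm]

theorem sub_eq_mul_sign_of_mem_pair {A B x y : ℝ} (hBA : B ≤ A) (hx : x = A ∨ x = B)
    (hy : y = A ∨ y = B) : y - x = (A - B) * SignType.sign (y - x) := by
  rcases hx with rfl | rfl <;> rcases hy with rfl | rfl
  · simp
  · rcases hBA.lt_or_eq with h | rfl
    · rw [sign_neg (by linarith)]; simp
    · simp
  · rcases hBA.lt_or_eq with h | rfl
    · rw [sign_pos (by linarith)]; simp
    · simp
  · simp

theorem div_add_one_mul_le_of_le_add {lam a C W : ℝ} (hlam : 0 ≤ lam) (hC : C ≤ W + 2 * a)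
    (hW : 2 * lam * a ≤ W) : lam / (lam + 1) * C ≤ W := by
  rw [div_mul_eq_mul_div, div_le_iff₀ (by linarith)]
  nlinarith

theorem abs_signType_cast_le_one (s : SignType) : |(s : ℤ)| ≤ 1 := by
  cases s <;> decide

namespace EnvyGame

def Bounded (d : ℤ × ℤ) : Prop := d.1 ≤ 1 ∧ d.2 ≤ 1 ∧ d.1 + d.2 ≤ 0

/-- Handing out a pair changes the envies `d` by `c`, or by `-c` if it is swapped. The pair is
swapped when that lowers the total envy, and on a tie when that raises the smaller envy. -/
def Swaps (d c : ℤ × ℤ) : Prop := 0 < c.1 + c.2 ∨ (c.1 + c.2 = 0 ∧ (d.2 ≤ d.1 ↔ 0 < c.1))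

instance (d c : ℤ × ℤ) : Decidable (Swaps d c) := by
  unfold Swaps; infer_instance

def step (d c : ℤ × ℤ) : ℤ × ℤ := if Swaps d c then d - c else d + c

theorem bounded_step {d c : ℤ × ℤ} (hd : Bounded d) (hc₁ : |c.1| ≤ 1) (hc₂ : |c.2| ≤ 1) :
    Bounded (step d c) := by
  obtain ⟨d₁, d₂⟩ := d
  obtain ⟨c₁, c₂⟩ := c
  simp only [Bounded, abs_le] at hd hc₁ hc₂
  unfold step
  split_ifs with h <;> simp only [Swaps, Bounded, Prod.mk_sub_mk, Prod.mk_add_mk] at h ⊢ <;> omega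

end EnvyGame

namespace PairAllocation

open EnvyGame

variable (v : ℕ → Fin 2 → NNReal)

/-- Goods `2 * k` and `2 * k + 1` form the `k`-th pair. Handed out as they come, agent 0 gets the
first and agent 1 the second; `shift v k` is then the change of the two agents' envies, in units
of `α i - β i`. -/
def shift (k : ℕ) : ℤ × ℤ :=
  (SignType.sign ((v (2 * k + 1) 0 : ℝ) - v (2 * k) 0),
    SignType.sign ((v (2 * k) 1 : ℝ) - v (2 * k + 1) 1))

def envy : ℕ → ℤ × ℤ
  | 0 => 0
  | k + 1 => step (envy k) (shift v k)

def alloc (t : ℕ) : Fin 2 :=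
  if (Swaps (envy v (t / 2)) (shift v (t / 2)) ↔ t % 2 = 1) then 0 else 1

/-- When good `t` is placed the algorithm has seen `v 0, …, v (t + 1)`, so `t = L.length - 2`
and both goods of the current pair are known. -/
def algorithm (L : List (Fin 2 → NNReal)) : Fin 2 :=
  alloc (fun t => L.getD t 0) (L.length - 2)

variable {v} in
theorem envy_congr {w : ℕ → Fin 2 → NNReal} {k : ℕ} (h : ∀ s < 2 * k, v s = w s) :
    envy v k = envy w k := by
  induction k with
  | zero => rfl
  | succ k ih =>
    simp only [envy, shift, ih fun s hs => h s (by omega), h (2 * k) (by omega),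
      h (2 * k + 1) (by omega)]

variable {v} in
theorem alloc_congr {w : ℕ → Fin 2 → NNReal} {t : ℕ} (h : ∀ s < t + 2, v s = w s) :
    alloc v t = alloc w t := by
  have hshift : shift v (t / 2) = shift w (t / 2) := by
    simp only [shift, h (2 * (t / 2)) (by omega), h (2 * (t / 2) + 1) (by omega)]
  rw [alloc, alloc, hshift, envy_congr (k := t / 2) fun s hs => h s (by omega)]

theorem allocF_algorithm (t : ℕ) : allocF 2 1 algorithm v t = alloc v t := by
  simp only [allocF, algorithm, List.length_map, List.length_range]
  exact alloc_congr fun s hs => by simp [List.getElem?_range (show s < t + 1 + 1 by omega)]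

theorem alloc_two_mul (k : ℕ) :
    alloc v (2 * k) = if Swaps (envy v k) (shift v k) then 1 else 0 := by
  simp only [alloc, Nat.mul_mod_right, zero_ne_one, iff_false, ite_not,
    Nat.mul_div_cancel_left k two_pos]

theorem alloc_two_mul_add_one (k : ℕ) :
    alloc v (2 * k + 1) = if Swaps (envy v k) (shift v k) then 0 else 1 := by
  have hdiv : (2 * k + 1) / 2 = k := by omega
  simp only [alloc, Nat.mul_add_mod, hdiv, iff_true]

theorem envy_bounded (k : ℕ) : Bounded (envy v k) := by
  induction k with
  | zero => simp [envy, Bounded]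
  | succ k ih =>
    exact bounded_step ih (abs_signType_cast_le_one _) (abs_signType_cast_le_one _)

def value (i j : Fin 2) (T : ℕ) : ℝ := ∑ t ∈ range T, if alloc v t = j then (v t i : ℝ) else 0

theorem bval_bundleF_algorithm (i j : Fin 2) (T : ℕ) :
    bval 2 v i (bundleF 2 1 algorithm v j T) = value v i j T := by
  simp only [bval, bundleF, value, sum_filter, allocF_algorithm]

theorem value_mono (i j : Fin 2) : Monotone (value v i j) := fun _ _ h =>
  sum_le_sum_of_subset_of_nonneg (range_subset_range.2 h) fun t _ _ => by positivity

theorem value_two_mul_succ (i j : Fin 2) (k : ℕ) :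
    value v i j (2 * (k + 1)) = value v i j (2 * k)
      + (if alloc v (2 * k) = j then (v (2 * k) i : ℝ) else 0)
      + (if alloc v (2 * k + 1) = j then (v (2 * k + 1) i : ℝ) else 0) := by
  rw [show 2 * (k + 1) = 2 * k + 1 + 1 by ring, value, sum_range_succ, sum_range_succ]
  rfl

section TwoValued

variable {α β : Fin 2 → NNReal} (hβα : ∀ i, β i ≤ α i)
  (hv : ∀ (t : ℕ) (i : Fin 2), v t i = α i ∨ v t i = β i)
include hβα hv

theorem beta_le (t : ℕ) (i : Fin 2) : (β i : ℝ) ≤ v t i := by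
  rcases hv t i with h | h <;> rw [h]
  exact_mod_cast hβα i

theorem le_alpha (t : ℕ) (i : Fin 2) : (v t i : ℝ) ≤ α i := by
  rcases hv t i with h | h <;> rw [h]
  exact_mod_cast hβα i

theorem shift_spec (k : ℕ) :
    (v (2 * k + 1) 0 : ℝ) - v (2 * k) 0 = ((α 0 : ℝ) - β 0) * (shift v k).1 ∧
      (v (2 * k) 1 : ℝ) - v (2 * k + 1) 1 = ((α 1 : ℝ) - β 1) * (shift v k).2 := by
  have hpair (t : ℕ) (i : Fin 2) : (v t i : ℝ) = α i ∨ (v t i : ℝ) = β i := by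
    rcases hv t i with h | h <;> simp [h]
  simp only [shift, SignType.intCast_cast]
  exact ⟨sub_eq_mul_sign_of_mem_pair (by exact_mod_cast hβα 0) (hpair _ _) (hpair _ _),
    sub_eq_mul_sign_of_mem_pair (by exact_mod_cast hβα 1) (hpair _ _) (hpair _ _)⟩

theorem value_sub_value_two_mul (k : ℕ) :
    value v 0 1 (2 * k) - value v 0 0 (2 * k) = ((α 0 : ℝ) - β 0) * (envy v k).1 ∧
      value v 1 0 (2 * k) - value v 1 1 (2 * k) = ((α 1 : ℝ) - β 1) * (envy v k).2 := by
  induction k with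
  | zero => simp [value, envy]
  | succ k ih =>
    obtain ⟨h₀, h₁⟩ := shift_spec v hβα hv k
    by_cases hs : Swaps (envy v k) (shift v k) <;>
      simp only [value_two_mul_succ, alloc_two_mul, alloc_two_mul_add_one, hs, ↓reduceIte,
        Fin.isValue, zero_ne_one, one_ne_zero, add_zero, envy, step, Prod.fst_sub, Prod.snd_sub,
        Prod.fst_add, Prod.snd_add, Int.cast_sub, Int.cast_add] <;>
      constructor <;> linarith [ih.1, ih.2]

theorem value_succ_le (i j : Fin 2) (T : ℕ) : value v i j (T + 1) ≤ value v i j T + α i := by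
  simp only [value, sum_range_succ]
  gcongr
  split_ifs
  · exact le_alpha v hβα hv T i
  · exact (α i).2

theorem value_sub_value_self_two_mul_le {i j : Fin 2} (hij : i ≠ j) (k : ℕ) :
    value v i j (2 * k) - value v i i (2 * k) ≤ α i - β i := by
  obtain ⟨h₀, h₁⟩ := value_sub_value_two_mul v hβα hv k
  obtain ⟨hd₀, hd₁, -⟩ := envy_bounded v k
  have hαβ (i : Fin 2) : (0 : ℝ) ≤ α i - β i := sub_nonneg.2 (by exact_mod_cast hβα i)
  fin_cases i <;> fin_cases j <;> simp only [Fin.zero_eta, Fin.mk_one] at hij ⊢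
  · exact absurd rfl hij
  · rw [h₀]; exact mul_le_of_le_one_right (hαβ 0) (by exact_mod_cast hd₀)
  · rw [h₁]; exact mul_le_of_le_one_right (hαβ 1) (by exact_mod_cast hd₁)
  · exact absurd rfl hij

theorem value_le_value_self_add (i j : Fin 2) (T : ℕ) :
    value v i j T ≤ value v i i T + 2 * α i := by
  rcases eq_or_ne i j with rfl | hij
  · linarith [(α i).2]
  have hj : value v i j T ≤ value v i j (2 * (T / 2)) + α i :=
    (value_mono v i j (by omega)).trans (value_succ_le v hβα hv i j _)
  have hi : value v i i (2 * (T / 2)) ≤ value v i i T := value_mono v i i (Nat.mul_div_le T 2)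
  linarith [value_sub_value_self_two_mul_le v hβα hv hij (T / 2), (β i).2]

theorem value_self_two_mul_ge (i : Fin 2) (k : ℕ) : k * (β i : ℝ) ≤ value v i i (2 * k) := by
  induction k with
  | zero => simp [value]
  | succ k ih =>
    have h₀ := beta_le v hβα hv (2 * k) i
    have h₁ := beta_le v hβα hv (2 * k + 1) i
    rw [value_two_mul_succ]
    push_cast
    by_cases hs : Swaps (envy v k) (shift v k) <;> fin_cases i <;>
      simp only [alloc_two_mul, alloc_two_mul_add_one, hs, ↓reduceIte, Fin.zero_eta, Fin.mk_one,
        Fin.isValue, zero_ne_one, one_ne_zero, add_zero] at ih h₀ h₁ ⊢ <;> linarith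

theorem eventually_le_value_self {i : Fin 2} (hβ : 0 < β i) (c : ℝ) :
    ∀ᶠ T in atTop, c ≤ value v i i T := by
  have hlim : Tendsto (fun T : ℕ => ((T / 2 : ℕ) : ℝ) * β i) atTop atTop :=
    (tendsto_natCast_atTop_atTop.comp (Nat.tendsto_div_const_atTop two_ne_zero)).atTop_mul_const
      (by exact_mod_cast hβ)
  filter_upwards [hlim.eventually_ge_atTop c] with T hT
  exact hT.trans ((value_self_two_mul_ge v hβα hv i _).trans
    (value_mono v i i (Nat.mul_div_le T 2)))

theorem eventually_ef (hβ : ∀ i, 0 < β i) {lam : ℝ} (hlam : 0 ≤ lam) :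
    ∀ᶠ T in atTop, ∀ i j, lam / (lam + 1) * value v i j T ≤ value v i i T := by
  filter_upwards [eventually_all.2 fun i =>
    eventually_le_value_self v hβα hv (hβ i) (2 * lam * α i)] with T hT i j
  exact div_add_one_mul_le_of_le_add hlam (value_le_value_self_add v hβα hv i j T) (hT i)

end TwoValued

end PairAllocation

/-- For two agents with `0 < β i ≤ α i`, there is a deterministic online allocation algorithm
with foresight `1` such that, on every personalized `2`-value stream and for every positive
integer `λ`, after some time `T₀` the allocation is `(λ/(λ+2))`-EF, `(λ/(λ+1))`-EF1 and
`(λ/(λ+1))`-PROP at the end of every time step `T ≥ T₀`. -/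
theorem statement9 (α β : Fin 2 → NNReal) (hβ : ∀ i, 0 < β i) (hβα : ∀ i, β i ≤ α i) :
    ∃ F : List (Fin 2 → NNReal) → Fin 2,
      ∀ v : ℕ → Fin 2 → NNReal, (∀ (t : ℕ) (i : Fin 2), v t i = α i ∨ v t i = β i) →
        ∀ lam : ℕ, 0 < lam →
          ∃ T₀ : ℕ, ∀ T : ℕ, T₀ ≤ T →
            (∀ i j : Fin 2,
              ((lam : ℝ) / ((lam : ℝ) + 2)) * bval 2 v i (bundleF 2 1 F v j T) ≤
                bval 2 v i (bundleF 2 1 F v i T)) ∧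
            (∀ i j : Fin 2, ∃ X ⊆ bundleF 2 1 F v j T, X.card ≤ 1 ∧
              ((lam : ℝ) / ((lam : ℝ) + 1)) * bval 2 v i (bundleF 2 1 F v j T \ X) ≤
                bval 2 v i (bundleF 2 1 F v i T)) ∧
            (∀ i : Fin 2,
              ((lam : ℝ) / ((lam : ℝ) + 1)) / 2 * (∑ t ∈ Finset.range T, (v t i : ℝ)) ≤
                bval 2 v i (bundleF 2 1 F v i T)) := by
  refine ⟨PairAllocation.algorithm, fun v hv lam _ => ?_⟩
  obtain ⟨T₀, hT₀⟩ := eventually_atTop.1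
    (PairAllocation.eventually_ef v hβα hv hβ (Nat.cast_nonneg (α := ℝ) lam))
  refine ⟨T₀, fun T hT => ?_⟩
  have hef : ∀ i j,
      (lam : ℝ) / (lam + 1) * bval 2 v i (bundleF 2 1 PairAllocation.algorithm v j T) ≤
        bval 2 v i (bundleF 2 1 PairAllocation.algorithm v i T) := by
    simpa only [PairAllocation.bval_bundleF_algorithm] using hT₀ T hT
  have hρ : (lam : ℝ) / (lam + 2) ≤ lam / (lam + 1) :=
    div_le_div_of_nonneg_left lam.cast_nonneg (by positivity) (by linarith)
  refine ⟨fun i j => ?_, fun i j => ⟨∅, empty_subset _, by simp, by simpa using hef i j⟩,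
    fun i => by simpa using prop_of_forall_ef (hef i)⟩
  exact (mul_le_mul_of_nonneg_right hρ (bval_nonneg _ _ _)).trans (hef i j)

end
end

section
/- Let α ≥ 1 be a real number, M a finite set of goods, and v : M → ℝ a valuation with 1 ≤ v(g) ≤ α for every g ∈ M. Let v̂ be the threshold valuation: v̂(g) = α if v(g) > √α and v̂(g) = √α otherwise, both extended additively to subsets of M. Then for every S ⊆ M: v̂(S)/√α ≤ v(S) ≤ v̂(S), where v(S) = Σ_{g ∈ S} v(g) and v̂(S) = Σ_{g ∈ S} v̂(g). -/
open Finset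

noncomputable section

def vhat {G : Type*} (α : ℝ) (v : G → ℝ) (g : G) : ℝ :=
  if Real.sqrt α < v g then α else Real.sqrt α

section

variable {G : Type*} {α : ℝ} {v : G → ℝ} {g : G}

theorem le_vhat (hv : v g ≤ α) : v g ≤ vhat α v g := by
  unfold vhat
  split_ifs with h
  · exact hv
  · exact le_of_not_gt h

theorem vhat_le_sqrt_mul (hα : 0 ≤ α) (hv : 1 ≤ v g) : vhat α v g ≤ Real.sqrt α * v g := by
  unfold vhat
  split_ifs with h
  · calc α = Real.sqrt α * Real.sqrt α := (Real.mul_self_sqrt hα).symm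
      _ ≤ Real.sqrt α * v g := by gcongr
  · exact le_mul_of_one_le_right (Real.sqrt_nonneg α) hv

end

/-- For a valuation `v` with values in `[1, α]` and its threshold valuation `v̂`, every subset
`S` of goods satisfies `v̂(S)/√α ≤ v(S) ≤ v̂(S)`. -/
theorem statement13 {G : Type*} (α : ℝ) (hα : 1 ≤ α) (M : Finset G) (v : G → ℝ)
    (hv : ∀ g ∈ M, 1 ≤ v g ∧ v g ≤ α) (S : Finset G) (hS : S ⊆ M) :
    (∑ g ∈ S, vhat α v g) / Real.sqrt α ≤ ∑ g ∈ S, v g ∧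
      ∑ g ∈ S, v g ≤ ∑ g ∈ S, vhat α v g := by
  have hvS : ∀ g ∈ S, 1 ≤ v g ∧ v g ≤ α := fun g hg => hv g (hS hg)
  constructor
  · rw [div_le_iff₀ (Real.sqrt_pos.mpr (by linarith)), sum_mul]
    refine sum_le_sum fun g hg => ?_
    rw [mul_comm]
    exact vhat_le_sqrt_mul (by linarith) (hvS g hg).1
  · exact sum_le_sum fun g hg => le_vhat (hvS g hg).2

end
end

section
/- Let n ≥ 1 be an integer, M a finite set of goods, and for each agent i ∈ Fin n let v_i : M → ℝ be a valuation with 1 ≤ v_i(g) ≤ α_i for every g ∈ M, where α_i ≥ 1; let v̂_i be the corresponding threshold valuation. Let (A_1, …, A_n) be pairwise disjoint subsets of M, let ρ ∈ (0,1] and k ∈ ℕ. If for all agents i, j there exists X ⊆ A_j with |X| ≤ k and v̂_i(A_i) ≥ ρ · v̂_i(A_j ∖ X), then for all agents i, j there exists X ⊆ A_j with |X| ≤ k and v_i(A_i) ≥ (ρ/√α_i) · v_i(A_j ∖ X). -/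
open Finset

noncomputable section

/-!
The threshold valuation overestimates every good, by a factor of at most `√α`: a good with
`v g > √α` gets `α = √α · √α < √α · v g`, any other gets `√α ≤ √α · v g` since `v g ≥ 1`.
Hence `ρ · v(A j \ X) ≤ ρ · v̂(A j \ X) ≤ v̂(A i) ≤ √α · v(A i)`.
-/

section Threshold

variable {G : Type*} {α : ℝ} {v : G → ℝ} {g : G}

theorem sum_le_sum_vhat (s : Finset G) (hv : ∀ g ∈ s, v g ≤ α) :
    ∑ g ∈ s, v g ≤ ∑ g ∈ s, vhat α v g :=
  sum_le_sum fun g hg => le_vhat (hv g hg)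

theorem sum_vhat_le_sqrt_mul_sum (s : Finset G) (hα : 0 ≤ α) (hv : ∀ g ∈ s, 1 ≤ v g) :
    ∑ g ∈ s, vhat α v g ≤ Real.sqrt α * ∑ g ∈ s, v g := by
  rw [mul_sum]
  exact sum_le_sum fun g hg => vhat_le_sqrt_mul hα (hv g hg)

theorem div_sqrt_mul_sum_le_of_mul_sum_vhat_le {ρ : ℝ} (hρ : 0 ≤ ρ) (hα : 0 < α)
    {S T : Finset G} (hS : ∀ g ∈ S, 1 ≤ v g) (hT : ∀ g ∈ T, v g ≤ α)
    (h : ρ * ∑ g ∈ T, vhat α v g ≤ ∑ g ∈ S, vhat α v g) :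
    ρ / Real.sqrt α * ∑ g ∈ T, v g ≤ ∑ g ∈ S, v g := by
  rw [div_mul_eq_mul_div, div_le_iff₀ (Real.sqrt_pos.mpr hα), mul_comm _ (Real.sqrt α)]
  calc ρ * ∑ g ∈ T, v g ≤ ρ * ∑ g ∈ T, vhat α v g :=
        mul_le_mul_of_nonneg_left (sum_le_sum_vhat T hT) hρ
    _ ≤ ∑ g ∈ S, vhat α v g := h
    _ ≤ Real.sqrt α * ∑ g ∈ S, v g := sum_vhat_le_sqrt_mul_sum S hα.le hS

end Threshold

theorem statement15_general {G : Type*} [DecidableEq G] (n : ℕ) (M : Finset G)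
    (α : Fin n → ℝ) (hα : ∀ i, 1 ≤ α i)
    (v : Fin n → G → ℝ) (hv : ∀ i, ∀ g ∈ M, 1 ≤ v i g ∧ v i g ≤ α i)
    (A : Fin n → Finset G) (hAM : ∀ i, A i ⊆ M)
    (ρ : ℝ) (hρ0 : 0 < ρ) (k : ℕ)
    (h : ∀ i j : Fin n, ∃ X ⊆ A j, X.card ≤ k ∧
      ρ * ∑ g ∈ A j \ X, vhat (α i) (v i) g ≤ ∑ g ∈ A i, vhat (α i) (v i) g) :
    ∀ i j : Fin n, ∃ X ⊆ A j, X.card ≤ k ∧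
      (ρ / Real.sqrt (α i)) * ∑ g ∈ A j \ X, v i g ≤ ∑ g ∈ A i, v i g := by
  intro i j
  obtain ⟨X, hXA, hXk, hX⟩ := h i j
  have hAi : ∀ g ∈ A i, 1 ≤ v i g := fun g hg => (hv i g (hAM i hg)).1
  have hAjX : ∀ g ∈ A j \ X, v i g ≤ α i := fun g hg => (hv i g (hAM j (mem_sdiff.mp hg).1)).2
  exact ⟨X, hXA, hXk, div_sqrt_mul_sum_le_of_mul_sum_vhat_le hρ0.le
    (zero_lt_one.trans_le (hα i)) hAi hAjX hX⟩

/-- If a (partial) allocation is `ρ`-EF`k` with respect to the threshold valuations, then it is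
`(ρ/√(α i))`-EF`k` with respect to the original valuations. -/
theorem statement15 {G : Type*} [DecidableEq G] (n : ℕ) (hn : 1 ≤ n) (M : Finset G)
    (α : Fin n → ℝ) (hα : ∀ i, 1 ≤ α i)
    (v : Fin n → G → ℝ) (hv : ∀ i, ∀ g ∈ M, 1 ≤ v i g ∧ v i g ≤ α i)
    (A : Fin n → Finset G) (hAM : ∀ i, A i ⊆ M)
    (hdisj : ∀ i j, i ≠ j → Disjoint (A i) (A j))
    (ρ : ℝ) (hρ0 : 0 < ρ) (hρ1 : ρ ≤ 1) (k : ℕ)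
    (h : ∀ i j : Fin n, ∃ X ⊆ A j, X.card ≤ k ∧
      ρ * ∑ g ∈ A j \ X, vhat (α i) (v i) g ≤ ∑ g ∈ A i, vhat (α i) (v i) g) :
    ∀ i j : Fin n, ∃ X ⊆ A j, X.card ≤ k ∧
      (ρ / Real.sqrt (α i)) * ∑ g ∈ A j \ X, v i g ≤ ∑ g ∈ A i, v i g :=
  statement15_general n M α hα v hv A hAM ρ hρ0 k h

end
end
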